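/- arXiv:1401.5978 — 7 statements merged into one kernel-verified Lean document; each statement's English description precedes it below -/
import Mathlib

section
/- For any prime p ≥ 5, the sum over k from 0 to p-1 of (binom(2k,k))^2 / 16^k is congruent to the Legendre symbol (-1/p) modulo p^2. -/
/-!
Put `p = 2a + 1` and `c k = C(2k,k) / (-4)^k`, so that `c k ^ 2 = C(2k,k)^2 / 16^k`.
For `a < k < p` the prime `p` divides `C(2k,k)`, so only `k ≤ a` contributes modulo `p²`.
Modulo `p` we have `c k ≡ C(a,k)` because `-1/2 ≡ a`, and the differences `c k - C(a,k)`
multiply to `0` modulo `p²`. As `C(a,k)` is symmetric in `k ↔ a - k`, the sum of squares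
`∑ c k ^ 2` then agrees modulo `p²` with the convolution `∑ c k * c (a - k)`, which is exactly
`(-1)^a = (-1/p)` by the identity `∑ C(2k,k) C(2(n-k),n-k) = 4^n`
(Chu–Vandermonde for `C(-1/2, k) = C(2k,k) / (-4)^k`).
-/

open Finset Nat

theorem Ring.choose_neg_half (k : ℕ) :
    Ring.choose (-1 / 2 : ℚ) k = centralBinom k / (-4) ^ k := by
  induction k with
  | zero => simp
  | succ k ih =>
    have h := Ring.choose_smul_choose (-1 / 2 : ℚ) (k.le_add_right 1)
    rw [Nat.choose_succ_self_right, Nat.add_sub_cancel_left, Ring.choose_one_right, ih,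
      nsmul_eq_mul] at h
    have hC : ((k + 1 : ℕ) : ℚ) * centralBinom (k + 1) = 2 * (2 * k + 1) * centralBinom k := by
      exact_mod_cast succ_mul_centralBinom_succ k
    apply mul_left_cancel₀ (by positivity : ((k + 1 : ℕ) : ℚ) ≠ 0)
    rw [h, mul_div_assoc', hC]
    field_simp
    ring

theorem Nat.sum_range_centralBinom_mul (n : ℕ) :
    ∑ k ∈ range (n + 1), centralBinom k * centralBinom (n - k) = 4 ^ n := by
  rw [← Finset.Nat.sum_antidiagonal_eq_sum_range_succ (fun i j => centralBinom i * centralBinom j)]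
  have hV := Ring.add_choose_eq (r := (-1 / 2 : ℚ)) (s := -1 / 2) n (Commute.refl _)
  have hneg : Ring.choose (-1 : ℚ) n = (-1) ^ n := by
    rw [Ring.choose_neg, add_sub_cancel_left, Ring.choose_natCast, Nat.choose_self]
    simp [Units.smul_def, Int.negOnePow_def]
  have hterm : ∀ ij ∈ antidiagonal n, Ring.choose (-1 / 2 : ℚ) ij.1 * Ring.choose (-1 / 2) ij.2
      = (centralBinom ij.1 * centralBinom ij.2 : ℕ) / (-4) ^ n := by
    intro ij hij
    rw [← mem_antidiagonal.1 hij, Ring.choose_neg_half, Ring.choose_neg_half, pow_add]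
    push_cast
    ring
  rw [show (-1 / 2 + -1 / 2 : ℚ) = -1 by norm_num, hneg, sum_congr rfl hterm, ← sum_div,
    eq_div_iff (by positivity), ← mul_pow, neg_one_mul, neg_neg, ← Nat.cast_sum] at hV
  exact_mod_cast hV.symm

theorem Nat.sum_range_centralBinom_mul_pow_mul {R : Type*} [CommSemiring R] (x : R) (n : ℕ) :
    ∑ k ∈ range (n + 1), (centralBinom k * x ^ k) * (centralBinom (n - k) * x ^ (n - k))
      = (4 * x) ^ n := by
  have hsum := congrArg (Nat.cast (R := R)) (Nat.sum_range_centralBinom_mul n)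
  push_cast at hsum
  rw [mul_pow, ← hsum, sum_mul]
  refine sum_congr rfl fun k hk => ?_
  rw [← pow_mul_pow_sub x (Nat.lt_succ_iff.1 (mem_range.1 hk))]
  ring

theorem Finset.sum_range_sq_eq_sum_mul_reflect {R : Type*} [CommRing R] {n : ℕ} {b c : ℕ → R}
    (hb : ∀ k ≤ n, b (n - k) = b k)
    (hbc : ∀ j ≤ n, ∀ k ≤ n, (c j - b j) * (c k - b k) = 0) :
    ∑ k ∈ range (n + 1), c k ^ 2 = ∑ k ∈ range (n + 1), c k * c (n - k) := by
  have hmul : ∀ j ≤ n, ∀ k ≤ n, c j * c k = b j * c k + c j * b k - b j * b k :=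
    fun j hj k hk => by linear_combination hbc j hj k hk
  have hreflect :
      ∑ k ∈ range (n + 1), b (n - k) * c (n - k) = ∑ k ∈ range (n + 1), b k * c k := by
    simpa using sum_range_reflect (fun k => b k * c k) (n + 1)
  calc ∑ k ∈ range (n + 1), c k ^ 2
      = ∑ k ∈ range (n + 1), (b (n - k) * c (n - k) + c k * b k - b k * b k) := by
        rw [sum_sub_distrib, sum_add_distrib, hreflect, ← sum_add_distrib, ← sum_sub_distrib]
        refine sum_congr rfl fun k hk => ?_
        have hk : k ≤ n := Nat.lt_succ_iff.1 (mem_range.1 hk)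
        rw [sq, hmul k hk k hk]
    _ = ∑ k ∈ range (n + 1), c k * c (n - k) := by
        refine sum_congr rfl fun k hk => ?_
        have hk : k ≤ n := Nat.lt_succ_iff.1 (mem_range.1 hk)
        rw [hmul k hk (n - k) (Nat.sub_le n k), hb k hk]

theorem ZMod.mul_eq_zero_of_castHom_eq_zero {p : ℕ} {x y : ZMod (p ^ 2)}
    (hx : ZMod.castHom (dvd_pow_self p two_ne_zero) (ZMod p) x = 0)
    (hy : ZMod.castHom (dvd_pow_self p two_ne_zero) (ZMod p) y = 0) : x * y = 0 := by
  obtain ⟨m, rfl⟩ := ZMod.intCast_surjective x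
  obtain ⟨n, rfl⟩ := ZMod.intCast_surjective y
  rw [map_intCast, ZMod.intCast_zmod_eq_zero_iff_dvd] at hx hy
  rw [← Int.cast_mul, ZMod.intCast_zmod_eq_zero_iff_dvd, Nat.cast_pow, sq]
  exact mul_dvd_mul hx hy

theorem ZMod.centralBinom_sq_eq_zero {p k : ℕ} [hp : Fact p.Prime] (hpk : p ≤ 2 * k)
    (hkp : k < p) : (centralBinom k : ZMod (p ^ 2)) ^ 2 = 0 := by
  have hk : ZMod.castHom (dvd_pow_self p two_ne_zero) (ZMod p) (centralBinom k) = 0 := by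
    rw [map_natCast, ZMod.natCast_eq_zero_iff]
    exact hp.out.dvd_choose hkp (by omega) hpk
  exact (sq _).trans (ZMod.mul_eq_zero_of_castHom_eq_zero hk hk)

theorem ZMod.sum_range_centralBinom_sq_mul {p a : ℕ} [Fact p.Prime] (ha : p = 2 * a + 1)
    (f : ℕ → ZMod (p ^ 2)) :
    ∑ k ∈ range p, (centralBinom k : ZMod (p ^ 2)) ^ 2 * f k
      = ∑ k ∈ range (a + 1), (centralBinom k : ZMod (p ^ 2)) ^ 2 * f k := by
  refine (sum_subset (range_subset_range.2 (by omega)) fun k hkp hka => ?_).symm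
  rw [mem_range] at hkp hka
  rw [ZMod.centralBinom_sq_eq_zero (by omega) hkp, zero_mul]

theorem ZMod.centralBinom_eq_neg_four_pow_mul_choose {p a : ℕ} [Fact p.Prime]
    (ha : p = 2 * a + 1) {k : ℕ} (hk : k ≤ a) :
    (centralBinom k : ZMod p) = (-4) ^ k * a.choose k := by
  induction k with
  | zero => simp
  | succ k ih =>
    have h2a : ((2 * a + 1 : ℕ) : ZMod p) = 0 := by rw [← ha, ZMod.natCast_self]
    have hC := congrArg (Nat.cast (R := ZMod p)) (succ_mul_centralBinom_succ k)
    have hB := congrArg (Nat.cast (R := ZMod p)) (a.choose_succ_right_eq k)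
    have hk0 : ((k + 1 : ℕ) : ZMod p) ≠ 0 := by
      rw [Ne, ZMod.natCast_eq_zero_iff]
      exact Nat.not_dvd_of_pos_of_lt k.succ_pos (by omega)
    push_cast [Nat.cast_sub (by omega : k ≤ a)] at h2a hC hB hk0
    apply mul_left_cancel₀ hk0
    rw [hC, ih (by omega)]
    linear_combination 2 * (-4) ^ k * a.choose k * h2a - (-4) ^ (k + 1) * hB

theorem ZMod.castHom_centralBinom_mul_pow {p a : ℕ} [Fact p.Prime] (ha : p = 2 * a + 1)
    {u : ZMod (p ^ 2)} (hu : 4 * u = -1) {k : ℕ} (hk : k ≤ a) :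
    ZMod.castHom (dvd_pow_self p two_ne_zero) (ZMod p) ((centralBinom k : ZMod (p ^ 2)) * u ^ k) = a.choose k := by
  have hu' := congrArg (ZMod.castHom (dvd_pow_self p two_ne_zero) (ZMod p)) hu
  rw [map_mul, map_ofNat, map_neg, map_one] at hu'
  rw [map_mul, map_pow, map_natCast, ZMod.centralBinom_eq_neg_four_pow_mul_choose ha hk,
    mul_right_comm, ← mul_pow, neg_mul, hu', neg_neg, one_pow, one_mul]

/-- For any prime `p ≥ 5`,
`∑_{k=0}^{p-1} (C(2k,k))^2 / 16^k ≡ (-1/p) (mod p^2)`, stated in `ZMod (p^2)`. -/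
theorem rv_supercongruence_16 (p : ℕ) [Fact p.Prime] (hp : 5 ≤ p) :
    ∑ k ∈ Finset.range p,
        ((Nat.choose (2 * k) k : ZMod (p ^ 2)) ^ 2 * ((16 : ZMod (p ^ 2))⁻¹) ^ k)
      = (legendreSym p (-1) : ZMod (p ^ 2)) := by
  have hodd : Odd p := (Fact.out : p.Prime).odd_of_ne_two (by omega)
  obtain ⟨v, hv⟩ := ((ZMod.isUnit_iff_coprime (2 ^ 2) (p ^ 2)).2
    ((Nat.coprime_two_left.2 hodd).pow 2 2)).exists_right_inv
  obtain ⟨a, ha⟩ := hodd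
  obtain ⟨u, hu⟩ : ∃ u : ZMod (p ^ 2), 4 * u = -1 :=
    ⟨-v, by push_cast at hv; linear_combination -hv⟩
  have h16 : (16 : ZMod (p ^ 2))⁻¹ = u ^ 2 :=
    ZMod.inv_eq_of_mul_eq_one _ _ _ (by linear_combination (4 * u - 1) * hu)
  set c : ℕ → ZMod (p ^ 2) := fun k => (centralBinom k : ZMod (p ^ 2)) * u ^ k
  have hc : ∀ k ≤ a, ZMod.castHom (dvd_pow_self p two_ne_zero) (ZMod p) (c k - a.choose k) = 0 :=
    fun k hk => by rw [map_sub, ZMod.castHom_centralBinom_mul_pow ha hu hk, map_natCast, sub_self]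
  calc _ = ∑ k ∈ range (a + 1), c k ^ 2 := by
        simp only [← centralBinom_eq_two_mul_choose, h16, ZMod.sum_range_centralBinom_sq_mul ha,
          c, mul_pow, pow_right_comm]
    _ = ∑ k ∈ range (a + 1), c k * c (a - k) :=
        sum_range_sq_eq_sum_mul_reflect (b := fun k => (a.choose k : ZMod (p ^ 2)))
          (fun k hk => by rw [Nat.choose_symm hk])
          (fun j hj k hk => ZMod.mul_eq_zero_of_castHom_eq_zero (hc j hj) (hc k hk))
    _ = (-1) ^ a := by rw [Nat.sum_range_centralBinom_mul_pow_mul, hu]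
    _ = legendreSym p (-1) := by
        rw [legendreSym.at_neg_one (by omega), ZMod.χ₄_eq_neg_one_pow (by omega),
          show p / 2 = a by omega]
        simp
end

section
/- For any prime p ≥ 5, the sum over k from 0 to p-1 of binom(3k,2k)·binom(2k,k) / 27^k is congruent to the Legendre symbol (-3/p) modulo p^2. -/
/-!
Let `P(α(α + 1)) = ∑_{k < p} (-α)_k (1 + α)_k / k!²` over `ℤ/p²`; the sum is the value at
`α = -1/3`, i.e. `P(-2/9)`. At an integer `0 ≤ n < p` the series terminates:
`P(n(n + 1)) = ∑ (-1)^k C(n, k) C(n + k, k) = (-1)^n`. Take `n` with `3n + 1 ∈ {p, 2p}`, so that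
`n(n + 1) ≡ -2/9 (mod p)` and `(-1)^n = (-3/p)`. The reflection `n ↦ p - 1 - n` moves `n(n + 1)` by
`-(2n + 1)p` (mod `p²`) without changing `(-1)^n`, so `p P'(n(n + 1)) = 0`; hence `P` is constant on
the residue class of `n(n + 1)` mod `p`, which contains `-2/9`.
-/

open Finset Polynomial
open scoped Nat

theorem Nat.factorial_three_mul (k : ℕ) :
    (3 * k)! = 3 ^ k * k ! * ∏ i ∈ range k, ((3 * i + 1) * (3 * i + 2)) := by
  induction k with
  | zero => simp
  | succ k ih =>
    rw [show 3 * (k + 1) = 3 * k + 1 + 1 + 1 by ring, factorial_succ, factorial_succ,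
      factorial_succ, ih, prod_range_succ, factorial_succ]
    ring

theorem Nat.choose_three_mul_mul_choose_two_mul_mul_factorial_sq (k : ℕ) :
    (3 * k).choose (2 * k) * (2 * k).choose k * k ! ^ 2 =
      3 ^ k * ∏ i ∈ range k, ((3 * i + 1) * (3 * i + 2)) := by
  have h₁ := add_choose_mul_factorial_mul_factorial k (2 * k)
  have h₂ := add_choose_mul_factorial_mul_factorial k k
  rw [show k + 2 * k = 3 * k by ring, factorial_three_mul] at h₁
  rw [show k + k = 2 * k by ring] at h₂
  apply Nat.eq_of_mul_eq_mul_left k.factorial_pos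
  rw [← h₂] at h₁
  linear_combination h₁

theorem Nat.not_dvd_two_mul_add_one_of_dvd_three_mul_add_one {p n : ℕ} (hp : p ≠ 1)
    (h : p ∣ 3 * n + 1) : ¬ p ∣ 2 * n + 1 := fun h' ↦ by
  have hn : p ∣ n := by
    simpa [show 3 * n + 1 - (2 * n + 1) = n by omega] using Nat.dvd_sub h h'
  exact hp (Nat.dvd_one.mp ((Nat.dvd_add_right (dvd_mul_of_dvd_right hn 2)).mp h'))

theorem Nat.exists_three_mul_add_one_eq {p : ℕ} (hp : ¬ 3 ∣ p) :
    ∃ n, 3 * n + 1 = p ∨ 3 * n + 1 = 2 * p := by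
  by_cases h : p % 3 = 1
  · exact ⟨p / 3, by omega⟩
  · exact ⟨(2 * p - 1) / 3, by omega⟩

/-- Chu–Vandermonde for `C(-1, n) = C(n + (-n - 1), n)`, as `C(-n - 1, k) = (-1)^k C(n + k, k)`. -/
theorem sum_range_neg_one_pow_mul_choose_mul_add_choose (n : ℕ) :
    ∑ k ∈ range (n + 1), (-1 : ℤ) ^ k * n.choose k * (n + k).choose k = (-1) ^ n := by
  have hvdm := Ring.add_choose_eq (r := (n : ℤ)) (s := -(n + 1 : ℤ)) n (Commute.all _ _)
  rw [show (n : ℤ) + -(n + 1) = -1 by ring, Ring.choose_neg, ← Nat.sum_antidiagonal_swap,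
    Nat.sum_antidiagonal_eq_sum_range_succ_mk] at hvdm
  convert hvdm.symm using 1
  · refine sum_congr rfl fun k hk ↦ ?_
    dsimp only [Prod.swap]
    rw [Ring.choose_neg, Ring.choose_natCast,
      Nat.choose_symm (by simpa [Nat.lt_succ_iff] using hk),
      show (n : ℤ) + 1 + k - 1 = (n + k : ℕ) by push_cast; ring, Ring.choose_natCast,
      Units.smul_def, Int.coe_negOnePow_natCast, smul_eq_mul]
    ring
  · rw [add_sub_cancel_left, Ring.choose_natCast, Nat.choose_self, Units.smul_def,
      Int.coe_negOnePow_natCast, smul_eq_mul, Nat.cast_one, mul_one]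

theorem prod_range_mul_succ_sub {R : Type*} [CommRing R] (n k : ℕ) :
    ∏ i ∈ range k, ((i : R) * (i + 1) - n * (n + 1)) =
      (-1) ^ k * (k ! * n.choose k) * (k ! * (n + k).choose k) := by
  have hdesc : ∏ i ∈ range k, ((n : R) - i) = k ! * n.choose k := by
    rw [← descPochhammer_eval_eq_prod_range, descPochhammer_eval_eq_descFactorial,
      Nat.descFactorial_eq_factorial_mul_choose, Nat.cast_mul]
  have hasc : ∏ i ∈ range k, ((n : R) + 1 + i) = k ! * (n + k).choose k := by
    rw [← Nat.cast_mul, ← Nat.ascFactorial_eq_factorial_mul_choose, Nat.ascFactorial_eq_prod_range]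
    push_cast
    rfl
  calc _ = ∏ i ∈ range k, -(((n : R) - i) * (n + 1 + i)) := prod_congr rfl fun i _ ↦ by ring
    _ = _ := by rw [prod_neg, card_range, prod_mul_distrib, hdesc, hasc, ← mul_assoc]

/-- Taylor expansion to first order: the first hypothesis on `P` forces `P'(a) * π = 0`. -/
theorem Polynomial.eval_eq_of_eval_add_mul_eq {R : Type*} [CommRing R] (P : R[X]) {π a w u : R}
    (hπ : π ^ 2 = 0) (hw : IsUnit w) (heq : P.eval (a + π * w) = P.eval a) (hu : π ∣ u - a) :
    P.eval u = P.eval a := by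
  have hsq (c : R) : (π * c) ^ 2 = 0 := by rw [mul_pow, hπ, zero_mul]
  have hderiv : P.derivative.eval a * π = 0 := by
    rw [eval_add_of_sq_eq_zero P a _ (hsq w), add_eq_left, ← mul_assoc] at heq
    exact hw.mul_left_eq_zero.mp heq
  obtain ⟨c, hc⟩ := hu
  rw [show u = a + π * c by rw [← hc, add_sub_cancel], eval_add_of_sq_eq_zero P a _ (hsq c),
    ← mul_assoc, hderiv, zero_mul, add_zero]

/-- `(1/3)_k (2/3)_k / k!² = C(3k, 2k) C(2k, k) / 27^k`, and `-6/27 = α(α + 1)` at `α = -1/3`. -/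
theorem ZMod.choose_three_mul_mul_choose_two_mul_mul_inv_pow {N k : ℕ}
    (hk : IsUnit (k ! : ZMod N)) (h27 : IsUnit (27 : ZMod N)) :
    ((3 * k).choose (2 * k) : ZMod N) * (2 * k).choose k * 27⁻¹ ^ k =
      (k ! : ZMod N)⁻¹ ^ 2 * ∏ i ∈ range k, ((i : ZMod N) * (i + 1) - -6 * 27⁻¹) := by
  have hfactor (i : ℕ) : (i : ZMod N) * (i + 1) - -6 * 27⁻¹ =
      3 * 27⁻¹ * ((3 * i + 1) * (3 * i + 2) : ℕ) := by
    push_cast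
    linear_combination (-(i : ZMod N) * (i + 1)) * ZMod.mul_inv_of_unit _ h27
  have hnat := congrArg (Nat.cast (R := ZMod N))
    (Nat.choose_three_mul_mul_choose_two_mul_mul_factorial_sq k)
  rw [prod_congr rfl fun i _ ↦ hfactor i, prod_mul_distrib, prod_const, card_range, mul_pow]
  push_cast at hnat ⊢
  linear_combination ((k ! : ZMod N)⁻¹ ^ 2 * 27⁻¹ ^ k) * hnat -
    (((3 * k).choose (2 * k) : ZMod N) * (2 * k).choose k * 27⁻¹ ^ k *
      (k ! * (k ! : ZMod N)⁻¹ + 1)) * ZMod.mul_inv_of_unit _ hk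

/-- `(truncHypergeom p).eval (α * (α + 1)) = ∑_{k < p} (-α)_k (1 + α)_k / k! ^ 2` is the truncated
`₂F₁(-α, 1 + α; 1; 1)`, since `(i - α) (i + 1 + α) = i (i + 1) - α (α + 1)`. -/
noncomputable def truncHypergeom (p : ℕ) : (ZMod (p ^ 2))[X] :=
  ∑ k ∈ range p, C ((k ! : ZMod (p ^ 2))⁻¹ ^ 2) *
    ∏ i ∈ range k, (C ((i : ZMod (p ^ 2)) * (i + 1)) - X)

theorem eval_truncHypergeom {p : ℕ} (x : ZMod (p ^ 2)) :
    (truncHypergeom p).eval x = ∑ k ∈ range p,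
      (k ! : ZMod (p ^ 2))⁻¹ ^ 2 * ∏ i ∈ range k, ((i : ZMod (p ^ 2)) * (i + 1) - x) := by
  simp [truncHypergeom, eval_finsetSum, eval_prod]

section

variable {p : ℕ} [Fact p.Prime]

theorem isUnit_factorial_zmod_prime_sq {k : ℕ} (hk : k < p) : IsUnit (k ! : ZMod (p ^ 2)) :=
  (ZMod.isUnit_natCast_iff_not_dvd_pow Fact.out two_pos).mpr
    fun h ↦ (((Fact.out : p.Prime).dvd_factorial).mp h).not_gt hk

theorem isUnit_27_zmod_prime_sq (hp : p ≠ 3) : IsUnit (27 : ZMod (p ^ 2)) := by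
  have h : ¬ p ∣ 3 ^ 3 := fun h ↦
    hp ((Nat.prime_dvd_prime_iff_eq Fact.out Nat.prime_three).mp
      ((Fact.out : p.Prime).dvd_of_dvd_pow h))
  exact_mod_cast (ZMod.isUnit_natCast_iff_not_dvd_pow Fact.out two_pos).mpr h

theorem sum_choose_three_mul_eq_eval_truncHypergeom (hp : p ≠ 3) :
    ∑ k ∈ range p, ((3 * k).choose (2 * k) : ZMod (p ^ 2)) * (2 * k).choose k * 27⁻¹ ^ k =
      (truncHypergeom p).eval (-6 * 27⁻¹) := by
  rw [eval_truncHypergeom]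
  exact sum_congr rfl fun k hk ↦ ZMod.choose_three_mul_mul_choose_two_mul_mul_inv_pow
    (isUnit_factorial_zmod_prime_sq (mem_range.mp hk)) (isUnit_27_zmod_prime_sq hp)

theorem eval_truncHypergeom_natCast_mul_succ {n : ℕ} (hn : n < p) :
    (truncHypergeom p).eval ((n : ZMod (p ^ 2)) * (n + 1)) = (-1) ^ n := by
  have hterm : ∀ k ∈ range p,
      (k ! : ZMod (p ^ 2))⁻¹ ^ 2 * ∏ i ∈ range k, ((i : ZMod (p ^ 2)) * (i + 1) - n * (n + 1)) =
        ((-1 : ℤ) ^ k * n.choose k * (n + k).choose k : ℤ) := fun k hk ↦ by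
    rw [prod_range_mul_succ_sub]
    push_cast
    linear_combination
      ((-1) ^ k * n.choose k * (n + k).choose k * (k ! * (k ! : ZMod (p ^ 2))⁻¹ + 1)) *
        ZMod.mul_inv_of_unit _ (isUnit_factorial_zmod_prime_sq (mem_range.mp hk))
  have hvanish : ∀ k ∈ range p, k ∉ range (n + 1) →
      (-1 : ℤ) ^ k * n.choose k * (n + k).choose k = 0 := fun k _ hk ↦ by
    rw [Nat.choose_eq_zero_of_lt (by simpa using hk), Nat.cast_zero, mul_zero, zero_mul]
  rw [eval_truncHypergeom, sum_congr rfl hterm, ← Int.cast_sum,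
    ← sum_subset (range_subset_range.mpr hn) hvanish,
    sum_range_neg_one_pow_mul_choose_mul_add_choose]
  simp

theorem eval_truncHypergeom_eq_of_dvd_sub (hp : p ≠ 2) {n : ℕ} {u : ZMod (p ^ 2)} (hn : n < p)
    (h2n : ¬ p ∣ 2 * n + 1) (hu : (p : ZMod (p ^ 2)) ∣ u - (n * (n + 1) : ZMod (p ^ 2))) :
    (truncHypergeom p).eval u = (-1) ^ n := by
  obtain ⟨m, hm⟩ : ∃ m, m + n + 1 = p := ⟨p - 1 - n, by omega⟩
  have hpsq : (p : ZMod (p ^ 2)) ^ 2 = 0 := by exact_mod_cast ZMod.natCast_self (p ^ 2)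
  have hpcast : (m + n + 1 : ZMod (p ^ 2)) = p := by exact_mod_cast congrArg Nat.cast hm
  have hw : IsUnit (-((2 * n + 1 : ℕ) : ZMod (p ^ 2))) :=
    ((ZMod.isUnit_natCast_iff_not_dvd_pow Fact.out two_pos).mpr h2n).neg
  have hreflect : (n : ZMod (p ^ 2)) * (n + 1) + p * -((2 * n + 1 : ℕ) : ZMod (p ^ 2)) =
      m * (m + 1) := by
    push_cast
    linear_combination (-1) * hpsq - ((p : ZMod (p ^ 2)) + m - n) * hpcast
  have hparity : (-1 : ZMod (p ^ 2)) ^ m = (-1) ^ n := by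
    obtain ⟨j, hj⟩ := (Fact.out : p.Prime).odd_of_ne_two hp
    rw [neg_one_pow_eq_pow_mod_two, neg_one_pow_eq_pow_mod_two (n := n)]
    congr 1
    omega
  rw [← eval_truncHypergeom_natCast_mul_succ hn]
  refine (truncHypergeom p).eval_eq_of_eval_add_mul_eq hpsq hw ?_ hu
  rw [hreflect, eval_truncHypergeom_natCast_mul_succ (by omega),
    eval_truncHypergeom_natCast_mul_succ hn, hparity]

theorem natCast_dvd_neg_six_mul_inv_sub (hp : p ≠ 3) {n : ℕ} (hn : p ∣ 3 * n + 1) :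
    (p : ZMod (p ^ 2)) ∣ -6 * 27⁻¹ - n * (n + 1) := by
  obtain ⟨c, hc⟩ := hn
  have hcast : (3 * n + 1 : ZMod (p ^ 2)) = p * c := by exact_mod_cast congrArg Nat.cast hc
  refine ⟨-3 * 27⁻¹ * c * (3 * n + 2), ?_⟩
  linear_combination ((n : ZMod (p ^ 2)) * (n + 1)) *
      ZMod.mul_inv_of_unit _ (isUnit_27_zmod_prime_sq hp) -
    (3 * 27⁻¹ * (3 * n + 2 : ZMod (p ^ 2))) * hcast

end

theorem legendreSym_neg_three_eq_neg_one_pow {p n : ℕ} [Fact p.Prime] (hp : p ≠ 2)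
    (hn : 3 * n + 1 = p ∨ 3 * n + 1 = 2 * p) : legendreSym p (-3) = (-1) ^ n := by
  have hodd := (Fact.out : p.Prime).odd_of_ne_two hp
  rw [jacobiSym.legendreSym.to_jacobiSym, jacobiSym.mod_right _ hodd,
    show 4 * (-3 : ℤ).natAbs = 12 by rfl]
  obtain ⟨j, rfl⟩ := hodd
  rcases Nat.even_or_odd n with hn₂ | hn₂
  · have : (2 * j + 1) % 12 = 1 ∨ (2 * j + 1) % 12 = 7 := by obtain ⟨i, rfl⟩ := hn₂; omega
    rcases this with h | h <;> rw [h, hn₂.neg_one_pow] <;> norm_num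
  · have : (2 * j + 1) % 12 = 5 ∨ (2 * j + 1) % 12 = 11 := by obtain ⟨i, rfl⟩ := hn₂; omega
    rcases this with h | h <;> rw [h, hn₂.neg_one_pow] <;> norm_num

/-- For any prime `p ≥ 5`,
`∑_{k=0}^{p-1} C(3k,2k) C(2k,k) / 27^k ≡ (-3/p) (mod p^2)`, stated in `ZMod (p^2)`. -/
theorem rv_supercongruence_27 (p : ℕ) [Fact p.Prime] (hp : 5 ≤ p) :
    ∑ k ∈ Finset.range p,
        ((Nat.choose (3 * k) (2 * k) : ZMod (p ^ 2)) * (Nat.choose (2 * k) k : ZMod (p ^ 2)) *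
          ((27 : ZMod (p ^ 2))⁻¹) ^ k)
      = (legendreSym p (-3) : ZMod (p ^ 2)) := by
  have h3 : ¬ 3 ∣ p := fun h ↦ by
    have := (Nat.prime_dvd_prime_iff_eq Nat.prime_three Fact.out).mp h
    omega
  obtain ⟨n, hn⟩ := Nat.exists_three_mul_add_one_eq h3
  have hdvd : p ∣ 3 * n + 1 := by
    rcases hn with h | h <;> simp [h]
  rw [sum_choose_three_mul_eq_eval_truncHypergeom (by omega),
    eval_truncHypergeom_eq_of_dvd_sub (by omega) (by omega)
      (Nat.not_dvd_two_mul_add_one_of_dvd_three_mul_add_one (by omega) hdvd)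
      (natCast_dvd_neg_six_mul_inv_sub (by omega) hdvd),
    legendreSym_neg_three_eq_neg_one_pow (by omega) hn]
  simp
end

section
/- For any prime p ≥ 5, the sum over k from 0 to p-1 of binom(6k,3k)·binom(3k,k) / 432^k is congruent to the Legendre symbol (-1/p) modulo p^2. -/
/-!
Put `x = (p² - 1) / 6` and `y = 5 x`, so that `6 x ≡ -1` and `6 y ≡ -5 (mod p²)`. For `k < p` the
`k`-th summand is `C(x, k) C(y, k) mod p²`: both are `∏_{j<k} (6j+1)(6j+5) / (36ᵏ k!²)`.

Write `x = x₁ p + x₀` and `y = y₁ p + y₀` in base `p`; from `x + y = p² - 1`,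
`x₀ + y₀ = x₁ + y₁ = p - 1`. For `k < p`, `C(x₁ p + x₀, k) ≡ C(x₀, k) + x₁ p D(x₀, k) (mod p²)`,
where `D(A, k)` is the derivative of `t ↦ C(A + t, k)` at `0`. Vandermonde's identity and its
derivative turn the sum into `C(p - 1, x₀) + p (x₁ D(p - 1, y₀) + y₁ D(p - 1, x₀))`. With
`C(p - 1, m) ≡ (-1)ᵐ (1 - p Hₘ)`, `D(p - 1, m) ≡ -(-1)ᵐ Hₘ` and `H_{p-1-m} ≡ Hₘ (mod p)` this is
`(-1)^x₀ (1 - p H_x₀ (1 + x₁ + y₁)) = (-1)^x₀`. Finally `6 x₀ + 1` is `p` or `5 p`, so `x₀` is even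
exactly when `p ≡ 1 (mod 4)`.
-/

open Finset
open scoped Nat

namespace Supercongruence

lemma factorial_six_mul_mul_factorial (k : ℕ) :
    (6 * k)! * k ! = 12 ^ k * (3 * k)! * (2 * k)! * ∏ j ∈ range k, ((6 * j + 1) * (6 * j + 5)) := by
  induction k with
  | zero => simp
  | succ k ih =>
    calc (6 * (k + 1))! * (k + 1)!
        = (6 * k + 6) * (6 * k + 5) * (6 * k + 4) * (6 * k + 3) * (6 * k + 2) * (6 * k + 1)
          * (k + 1) * ((6 * k)! * k !) := by
          rw [show 6 * (k + 1) = 6 * k + 5 + 1 by ring]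
          simp only [Nat.factorial_succ]
          ring
      _ = 12 ^ (k + 1) * (3 * (k + 1))! * (2 * (k + 1))!
          * ∏ j ∈ range (k + 1), ((6 * j + 1) * (6 * j + 5)) := by
          rw [ih, show 3 * (k + 1) = 3 * k + 2 + 1 by ring,
            show 2 * (k + 1) = 2 * k + 1 + 1 by ring]
          simp only [Nat.factorial_succ, prod_range_succ]
          ring

lemma choose_six_mul_mul_choose_mul_factorial_sq (k : ℕ) :
    (6 * k).choose (3 * k) * (3 * k).choose k * (k ! * k !)
      = 12 ^ k * ∏ j ∈ range k, ((6 * j + 1) * (6 * j + 5)) := by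
  have h₆ := Nat.add_choose_mul_factorial_mul_factorial (3 * k) (3 * k)
  have h₃ := Nat.add_choose_mul_factorial_mul_factorial (2 * k) k
  rw [show 3 * k + 3 * k = 6 * k by ring] at h₆
  rw [show 2 * k + k = 3 * k by ring] at h₃
  apply Nat.eq_of_mul_eq_mul_right (Nat.mul_pos (3 * k).factorial_pos (2 * k).factorial_pos)
  calc (6 * k).choose (3 * k) * (3 * k).choose k * (k ! * k !) * ((3 * k)! * (2 * k)!)
      = (6 * k).choose (3 * k) * ((3 * k).choose k * (2 * k)! * k !) * (3 * k)! * k ! := by ring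
    _ = (6 * k)! * k ! := by rw [h₃, h₆]
    _ = _ := by rw [factorial_six_mul_mul_factorial]; ring

lemma cast_choose_mul_factorial {R : Type*} [CommRing R] (x k : ℕ) :
    ((x.choose k * k ! : ℕ) : R) = ∏ j ∈ range k, ((x : R) - j) := by
  rw [mul_comm, ← Nat.descFactorial_eq_factorial_mul_choose, ← descPochhammer_eval_eq_descFactorial,
    descPochhammer_eval_eq_prod_range]

lemma cast_choose_mul_choose_mul_factorial_sq {R : Type*} [CommRing R] {x y : ℕ}
    (hx : 6 * (x : R) = -1) (hy : 6 * (y : R) = -5) (k : ℕ) :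
    ((x.choose k * y.choose k * 432 ^ k * (k ! * k !) : ℕ) : R)
      = (((6 * k).choose (3 * k) * (3 * k).choose k * (k ! * k !) : ℕ) : R) := by
  rw [choose_six_mul_mul_choose_mul_factorial_sq,
    show x.choose k * y.choose k * 432 ^ k * (k ! * k !)
      = (x.choose k * k !) * (y.choose k * k !) * 432 ^ k by ring]
  rw [Nat.cast_mul, Nat.cast_mul, cast_choose_mul_factorial, cast_choose_mul_factorial,
    Nat.cast_mul, Nat.cast_prod]
  have hpair : ∀ j : ℕ, ((x : R) - j) * ((y : R) - j) * 432
      = 12 * ((6 * j + 1) * (6 * j + 5)) := fun j => by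
    linear_combination (72 * (y : R) - 72 * j) * hx + (-72 * (j : R) - 12) * hy
  have hconst (c : R) : c ^ k = ∏ _j ∈ range k, c := by simp
  push_cast
  rw [hconst 432, hconst 12, ← prod_mul_distrib, ← prod_mul_distrib, ← prod_mul_distrib]
  exact prod_congr rfl fun j _ => hpair j

lemma cast_choose_six_mul_mul_choose_mul_inv_pow {n x y k : ℕ} (hx : 6 * (x : ZMod n) = -1)
    (hy : 6 * (y : ZMod n) = -5) (h432 : IsUnit (432 : ZMod n)) (hk : IsUnit (k ! : ZMod n)) :
    ((6 * k).choose (3 * k) : ZMod n) * ((3 * k).choose k : ZMod n) * (432 : ZMod n)⁻¹ ^ k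
      = (x.choose k : ZMod n) * (y.choose k : ZMod n) := by
  have h := cast_choose_mul_choose_mul_factorial_sq hx hy k
  push_cast at h
  calc ((6 * k).choose (3 * k) : ZMod n) * ((3 * k).choose k : ZMod n) * (432 : ZMod n)⁻¹ ^ k
      = (x.choose k : ZMod n) * (y.choose k : ZMod n) * 432 ^ k * (432 : ZMod n)⁻¹ ^ k := by
        rw [(hk.mul hk).mul_right_cancel h]
    _ = (x.choose k : ZMod n) * (y.choose k : ZMod n) * (432 * (432 : ZMod n)⁻¹) ^ k := by ring
    _ = _ := by rw [ZMod.mul_inv_of_unit _ h432, one_pow, mul_one]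

lemma sum_range_choose_mul_choose (m B : ℕ) {n : ℕ} (h : B < n) :
    ∑ k ∈ range n, m.choose k * B.choose k = (m + B).choose B := by
  rw [Nat.add_choose_eq, Finset.Nat.sum_antidiagonal_eq_sum_range_succ_mk]
  refine (sum_subset (range_subset_range.2 h) fun k _ hk => ?_).symm.trans
    (sum_congr rfl fun k hk => ?_)
  · rw [mem_range, not_lt] at hk
    rw [Nat.choose_eq_zero_of_lt (by omega : B < k), mul_zero]
  · rw [Nat.choose_symm (by simpa [Nat.lt_succ_iff] using hk)]

lemma digits_add_of_add_eq_sq_sub_one {p : ℕ} (hp : 0 < p) {x y : ℕ} (hxy : x + y = p ^ 2 - 1) :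
    x % p + y % p = p - 1 ∧ x / p + y / p = p - 1 := by
  have hx := Nat.div_add_mod x p
  have hy := Nat.div_add_mod y p
  have hx' := Nat.mod_lt x hp
  have hy' := Nat.mod_lt y hp
  generalize x / p = x₁, x % p = x₀, y / p = y₁, y % p = y₀ at *
  subst hx hy
  zify [Nat.one_le_pow 2 p hp, Nat.one_le_iff_ne_zero.2 hp.ne'] at *
  have h₁ : (x₁ : ℤ) + y₁ < p := by nlinarith
  have h₂ : (p : ℤ) - 1 ≤ x₁ + y₁ := by nlinarith
  constructor <;> nlinarith

variable {p : ℕ}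

def modP (p : ℕ) : ZMod (p ^ 2) →+* ZMod p :=
  ZMod.castHom (dvd_pow_self p two_ne_zero) (ZMod p)

lemma natCast_mul_self_eq_zero : (p : ZMod (p ^ 2)) * p = 0 := by
  rw [← sq, ← Nat.cast_pow, ZMod.natCast_self]

/-- Multiplication by `p`, as a map `ZMod p → ZMod (p ^ 2)` onto the ideal `(p)`: first-order
terms mod `p ^ 2` are written `pMul p u` and computed in the field `ZMod p`. -/
def pMul (p : ℕ) : ZMod p →+ ZMod (p ^ 2) :=
  ZMod.lift p ⟨(AddMonoidHom.mulLeft (p : ZMod (p ^ 2))).comp (Int.castAddHom _), by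
    simp [natCast_mul_self_eq_zero]⟩

lemma pMul_intCast (n : ℤ) : pMul p n = p * n := ZMod.lift_coe _ _ n

lemma pMul_one : pMul p 1 = p := by
  simpa using pMul_intCast (p := p) 1

lemma pMul_mul (u : ZMod p) (c : ZMod (p ^ 2)) : pMul p u * c = pMul p (u * modP p c) := by
  obtain ⟨m, rfl⟩ := ZMod.intCast_surjective u
  obtain ⟨n, rfl⟩ := ZMod.intCast_surjective c
  rw [map_intCast (modP p), ← Int.cast_mul, pMul_intCast, pMul_intCast]
  push_cast; ring

lemma modP_pMul (u : ZMod p) : modP p (pMul p u) = 0 := by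
  obtain ⟨m, rfl⟩ := ZMod.intCast_surjective u
  simp [pMul_intCast]

lemma pMul_mul_pMul (u v : ZMod p) : pMul p u * pMul p v = 0 := by
  rw [pMul_mul, modP_pMul, mul_zero, map_zero]

lemma pMul_injective [NeZero p] : Function.Injective (pMul p) := by
  refine (injective_iff_map_eq_zero _).2 fun u hu => ?_
  obtain ⟨m, rfl⟩ := ZMod.intCast_surjective u
  rw [pMul_intCast, ← Int.cast_natCast, ← Int.cast_mul, ZMod.intCast_zmod_eq_zero_iff_dvd,
    Nat.cast_pow, sq] at hu
  rw [ZMod.intCast_zmod_eq_zero_iff_dvd]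
  exact (mul_dvd_mul_iff_left (by exact_mod_cast NeZero.ne p)).1 hu

def harmonicZMod (p m : ℕ) : ZMod p := ∑ i ∈ range m, ((i + 1 : ℕ) : ZMod p)⁻¹

variable [Fact p.Prime]

lemma isUnit_natCast_of_lt {a : ℕ} (h0 : 0 < a) (h : a < p) : IsUnit (a : ZMod (p ^ 2)) :=
  (ZMod.isUnit_natCast_iff_not_dvd_pow Fact.out two_pos).2 (Nat.not_dvd_of_pos_of_lt h0 h)

lemma natCast_succ_ne_zero {i : ℕ} (h : i + 1 < p) : ((i + 1 : ℕ) : ZMod p) ≠ 0 := by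
  rw [Ne, ZMod.natCast_eq_zero_iff]
  exact Nat.not_dvd_of_pos_of_lt i.succ_pos h

lemma pMul_mul_natCast_inv {i : ℕ} (h : i + 1 < p) (u : ZMod p) :
    pMul p (u * ((i + 1 : ℕ) : ZMod p)⁻¹) * ((i + 1 : ℕ) : ZMod (p ^ 2)) = pMul p u := by
  rw [pMul_mul, map_natCast, inv_mul_cancel_right₀ (natCast_succ_ne_zero h)]

lemma cast_sub_one_choose_sq {m : ℕ} (hm : m < p) :
    (((p - 1).choose m : ℕ) : ZMod (p ^ 2)) = (-1) ^ m - pMul p ((-1) ^ m * harmonicZMod p m) := by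
  induction m with
  | zero => simp [harmonicZMod]
  | succ k ih =>
    have hu := isUnit_natCast_of_lt (a := k + 1) k.succ_pos hm
    have hrec : (((p - 1).choose (k + 1) : ℕ) : ZMod (p ^ 2)) * ((k + 1 : ℕ) : ZMod (p ^ 2))
        = (((p - 1).choose k : ℕ) : ZMod (p ^ 2)) * (p - ((k + 1 : ℕ) : ZMod (p ^ 2))) := by
      rw [← Nat.cast_sub hm.le, ← Nat.cast_mul, ← Nat.cast_mul, Nat.choose_succ_right_eq,
        show p - 1 - k = p - (k + 1) by omega]
    have hH : pMul p ((-1) ^ (k + 1) * harmonicZMod p (k + 1))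
        = -pMul p ((-1) ^ k * harmonicZMod p k)
          - pMul p ((-1) ^ k * ((k + 1 : ℕ) : ZMod p)⁻¹) := by
      rw [← map_neg, ← map_sub, harmonicZMod, sum_range_succ, ← harmonicZMod]
      ring_nf
    have hQ := pMul_mul_natCast_inv hm ((-1 : ZMod p) ^ k)
    have hP : pMul p ((-1) ^ k * harmonicZMod p k) * p = 0 := by
      rw [← pMul_one, pMul_mul_pMul]
    have hsign : pMul p ((-1) ^ k) = (-1) ^ k * p := by
      rw [← pMul_one, mul_comm, pMul_mul, one_mul, map_pow (modP p), map_neg, map_one]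
    apply hu.mul_right_cancel
    rw [hrec, ih (by omega)]
    linear_combination ((k + 1 : ℕ) : ZMod (p ^ 2)) * hH - hQ - hP - hsign

lemma cast_sub_one_choose {m : ℕ} (hm : m < p) :
    (((p - 1).choose m : ℕ) : ZMod p) = (-1) ^ m := by
  simpa [modP_pMul] using congrArg (modP p) (cast_sub_one_choose_sq hm)

lemma cast_prime_choose_succ {i : ℕ} (hi : i + 1 < p) :
    ((p.choose (i + 1) : ℕ) : ZMod (p ^ 2)) = pMul p ((-1) ^ i * ((i + 1 : ℕ) : ZMod p)⁻¹) := by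
  apply (isUnit_natCast_of_lt (a := i + 1) i.succ_pos hi).mul_right_cancel
  have hrec := Nat.add_one_mul_choose_eq (p - 1) i
  rw [Nat.sub_add_cancel (Fact.out : p.Prime).one_le] at hrec
  rw [pMul_mul_natCast_inv hi, ← Nat.cast_mul, ← hrec, Nat.cast_mul, ← pMul_one, pMul_mul,
    one_mul, map_natCast, cast_sub_one_choose (by omega)]

/-- The derivative at `t = 0` of `t ↦ (A + t).choose k`, read mod `p`. -/
def chooseDeriv (p A k : ℕ) : ZMod p :=
  ∑ i ∈ range k, (-1) ^ i * ((i + 1 : ℕ) : ZMod p)⁻¹ * (A.choose (k - (i + 1)) : ZMod p)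

lemma cast_mul_add_choose (A n : ℕ) {k : ℕ} (hk : k < p) :
    (((n * p + A).choose k : ℕ) : ZMod (p ^ 2))
      = (A.choose k : ZMod (p ^ 2)) + pMul p (n * chooseDeriv p A k) := by
  induction n generalizing k with
  | zero => simp
  | succ n ih =>
    have hterm : ∀ i ∈ range k, (((p.choose (i + 1) * (n * p + A).choose (k - (i + 1))) : ℕ) :
        ZMod (p ^ 2)) = pMul p ((-1) ^ i * ((i + 1 : ℕ) : ZMod p)⁻¹
          * (A.choose (k - (i + 1)) : ZMod p)) := by
      intro i hi
      rw [mem_range] at hi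
      rw [Nat.cast_mul, cast_prime_choose_succ (by omega), pMul_mul, ih (by omega), map_add,
        modP_pMul, add_zero, map_natCast]
    rw [show (n + 1) * p + A = p + (n * p + A) by ring, Nat.add_choose_eq,
      Nat.sum_antidiagonal_eq_sum_range_succ_mk, Nat.cast_sum, sum_range_succ',
      sum_congr rfl hterm, ← map_sum, Nat.choose_zero_right, one_mul, Nat.sub_zero, ih hk,
      ← chooseDeriv, Nat.cast_succ, add_one_mul, map_add]
    abel

/-- The derivative at `t = 0` of Vandermonde's identity
`∑ₖ (A + t).choose k * B.choose k = (A + B + t).choose B`, obtained by comparing both sides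
mod `p ^ 2` at `t = p`. -/
lemma sum_chooseDeriv_mul_choose {A B : ℕ} (h : A + B < p) :
    ∑ k ∈ range p, chooseDeriv p A k * (B.choose k : ZMod p) = chooseDeriv p (A + B) B := by
  have hB : B < p := by omega
  have hV := congrArg (Nat.cast (R := ZMod (p ^ 2))) (sum_range_choose_mul_choose (1 * p + A) B hB)
  have hV₀ := congrArg (Nat.cast (R := ZMod (p ^ 2))) (sum_range_choose_mul_choose A B hB)
  rw [add_assoc, cast_mul_add_choose (A + B) 1 hB, Nat.cast_sum] at hV
  push_cast at hV₀
  rw [sum_congr rfl fun k hk => by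
    rw [Nat.cast_mul, cast_mul_add_choose A 1 (mem_range.1 hk), add_mul, pMul_mul, map_natCast],
    sum_add_distrib, ← map_sum, hV₀] at hV
  simpa using pMul_injective (add_left_cancel hV)

lemma chooseDeriv_sub_one {m : ℕ} (hm : m < p) :
    chooseDeriv p (p - 1) m = -(-1) ^ m * harmonicZMod p m := by
  rw [chooseDeriv, harmonicZMod, mul_sum]
  refine sum_congr rfl fun i hi => ?_
  obtain ⟨j, rfl⟩ : ∃ j, m = i + 1 + j := ⟨m - (i + 1), by simp at hi; omega⟩
  rw [Nat.add_sub_cancel_left, cast_sub_one_choose (by omega)]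
  ring

lemma harmonicZMod_sub_one {m : ℕ} (hm : m ≤ p - 1) :
    harmonicZMod p (p - 1) = harmonicZMod p m - harmonicZMod p (p - 1 - m) := by
  have hsplit := sum_range_add (fun i => ((i + 1 : ℕ) : ZMod p)⁻¹) m (p - 1 - m)
  have hreflect : ∑ i ∈ range (p - 1 - m), ((m + i + 1 : ℕ) : ZMod p)⁻¹
      = -harmonicZMod p (p - 1 - m) := by
    rw [← sum_range_reflect, harmonicZMod, ← sum_neg_distrib]
    refine sum_congr rfl fun j hj => ?_
    rw [← inv_neg]
    congr 1
    refine eq_neg_of_add_eq_zero_left ?_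
    rw [← Nat.cast_add, show m + (p - 1 - m - 1 - j) + 1 + (j + 1) = p by simp at hj; omega,
      ZMod.natCast_self]
  rw [Nat.add_sub_cancel' hm, hreflect] at hsplit
  rw [harmonicZMod, hsplit, ← harmonicZMod, sub_eq_add_neg]

lemma harmonicZMod_sub_one_sub (hp : p ≠ 2) {m : ℕ} (hm : m ≤ p - 1) :
    harmonicZMod p (p - 1 - m) = harmonicZMod p m := by
  have h0 := harmonicZMod_sub_one (p := p) (Nat.zero_le _)
  have h2 : (2 : ZMod p) ≠ 0 := by
    simpa using natCast_succ_ne_zero (p := p) (i := 1)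
      (lt_of_le_of_ne (Fact.out : p.Prime).two_le (Ne.symm hp))
  have hzero : harmonicZMod p (p - 1) = 0 := by
    rw [show harmonicZMod p 0 = 0 from sum_range_zero _, Nat.sub_zero, zero_sub] at h0
    exact (mul_eq_zero.1 (by linear_combination h0 : (2 : ZMod p) * _ = 0)).resolve_left h2
  linear_combination harmonicZMod_sub_one hm - hzero

lemma sum_cast_choose_mul_choose_digits (x₀ y₀ x₁ y₁ : ℕ) (h : x₀ + y₀ < p) :
    ∑ k ∈ range p, (((x₁ * p + x₀).choose k : ℕ) : ZMod (p ^ 2)) * ((y₁ * p + y₀).choose k : ℕ)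
      = ((x₀ + y₀).choose x₀ : ZMod (p ^ 2))
        + pMul p (x₁ * chooseDeriv p (x₀ + y₀) y₀ + y₁ * chooseDeriv p (x₀ + y₀) x₀) := by
  have hterm : ∀ k ∈ range p,
      (((x₁ * p + x₀).choose k : ℕ) : ZMod (p ^ 2)) * ((y₁ * p + y₀).choose k : ℕ)
        = ((x₀.choose k * y₀.choose k : ℕ) : ZMod (p ^ 2))
          + pMul p (x₁ * (chooseDeriv p x₀ k * y₀.choose k)
            + y₁ * (chooseDeriv p y₀ k * x₀.choose k)) := by
    intro k hk
    have hx := pMul_mul ((x₁ : ZMod p) * chooseDeriv p x₀ k) (y₀.choose k : ZMod (p ^ 2))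
    have hy := pMul_mul ((y₁ : ZMod p) * chooseDeriv p y₀ k) (x₀.choose k : ZMod (p ^ 2))
    rw [map_natCast, mul_assoc] at hx hy
    rw [cast_mul_add_choose x₀ x₁ (mem_range.1 hk), cast_mul_add_choose y₀ y₁ (mem_range.1 hk),
      map_add, Nat.cast_mul]
    linear_combination
      hx + hy + pMul_mul_pMul (p := p) (x₁ * chooseDeriv p x₀ k) (y₁ * chooseDeriv p y₀ k)
  have hV := congrArg (Nat.cast (R := ZMod (p ^ 2))) (sum_range_choose_mul_choose x₀ y₀ (n := p)
    (by omega))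
  rw [Nat.cast_sum] at hV
  rw [sum_congr rfl hterm, sum_add_distrib, hV, ← Nat.choose_symm_add, ← map_sum, sum_add_distrib,
    ← mul_sum, ← mul_sum, sum_chooseDeriv_mul_choose h,
    sum_chooseDeriv_mul_choose (by omega : y₀ + x₀ < p), add_comm y₀ x₀]

theorem sum_cast_choose_mul_choose_of_add_eq_sq_sub_one (hp : p ≠ 2) {x y : ℕ}
    (hxy : x + y = p ^ 2 - 1) :
    ∑ k ∈ range p, (x.choose k : ZMod (p ^ 2)) * (y.choose k : ZMod (p ^ 2)) = (-1) ^ (x % p) := by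
  have hprime : p.Prime := Fact.out
  have hodd : p % 2 = 1 := Nat.odd_iff.1 (hprime.odd_of_ne_two hp)
  obtain ⟨hdigit₀, hdigit₁⟩ := digits_add_of_add_eq_sq_sub_one hprime.pos hxy
  have hsum := sum_cast_choose_mul_choose_digits (x % p) (y % p) (x / p) (y / p)
    (by rw [hdigit₀]; exact Nat.sub_lt hprime.pos one_pos)
  have hxp := Nat.mod_lt x hprime.pos
  rw [Nat.div_add_mod', Nat.div_add_mod', hdigit₀] at hsum
  generalize x % p = x₀, y % p = y₀, x / p = x₁, y / p = y₁ at *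
  obtain rfl : y₀ = p - 1 - x₀ := by omega
  have hsign : (-1 : ZMod p) ^ (p - 1 - x₀) = (-1) ^ x₀ := by
    rw [neg_one_pow_eq_pow_mod_two, show (p - 1 - x₀) % 2 = x₀ % 2 by omega,
      ← neg_one_pow_eq_pow_mod_two]
  have hcoef : (1 + x₁ + y₁ : ZMod p) = 0 := by
    rw [← Nat.cast_one, ← Nat.cast_add, ← Nat.cast_add, show 1 + x₁ + y₁ = p by omega,
      ZMod.natCast_self]
  rw [cast_sub_one_choose_sq hxp, chooseDeriv_sub_one (by omega), chooseDeriv_sub_one hxp, hsign,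
    harmonicZMod_sub_one_sub hp (by omega)] at hsum
  rw [hsum, sub_add_eq_add_sub, add_sub_assoc, add_eq_left, ← map_sub]
  convert map_zero (pMul p)
  linear_combination (-(-1) ^ x₀ * harmonicZMod p x₀) * hcoef

lemma six_mul_div_six_add_one_eq_sq (hp : 5 ≤ p) : 6 * ((p ^ 2 - 1) / 6) + 1 = p ^ 2 := by
  have h2 := (Fact.out : p.Prime).eq_one_or_self_of_dvd 2
  have h3 := (Fact.out : p.Prime).eq_one_or_self_of_dvd 3
  have hsq : p ^ 2 % 6 = 1 := by
    rcases (by omega : p % 6 = 1 ∨ p % 6 = 5) with h | h <;> simp [Nat.pow_mod, h]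
  omega

lemma neg_one_pow_mod_eq_legendreSym (hp : 5 ≤ p) :
    (-1 : ℤ) ^ ((p ^ 2 - 1) / 6 % p) = legendreSym p (-1) := by
  have hsq := six_mul_div_six_add_one_eq_sq hp
  generalize (p ^ 2 - 1) / 6 = x at *
  have hdvd : p ∣ 6 * (x % p) + 1 := by
    rw [← ZMod.natCast_eq_zero_iff]
    have := congrArg (Nat.cast (R := ZMod p)) hsq
    push_cast [ZMod.natCast_mod] at this ⊢
    rw [this, ZMod.natCast_self, zero_pow two_ne_zero]
  obtain ⟨c, hc⟩ := hdvd
  have hx₀ := Nat.mod_lt x (Fact.out : p.Prime).pos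
  generalize x % p = x₀ at *
  have hc6 : c < 6 := by nlinarith
  have hparity : x₀ % 2 = if p % 4 = 1 then 0 else 1 := by
    interval_cases c <;> split_ifs <;> omega
  have hodd : p % 2 ≠ 0 := by
    have := (Fact.out : p.Prime).eq_one_or_self_of_dvd 2
    omega
  rw [legendreSym.at_neg_one (by omega), ZMod.χ₄_nat_eq_if_mod_four, if_neg hodd,
    neg_one_pow_eq_pow_mod_two, hparity]
  split_ifs <;> rfl

lemma six_mul_cast_sq_sub_one_div_six (hp : 5 ≤ p) :
    6 * (((p ^ 2 - 1) / 6 : ℕ) : ZMod (p ^ 2)) = -1 := by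
  have h := congrArg (Nat.cast (R := ZMod (p ^ 2))) (six_mul_div_six_add_one_eq_sq hp)
  rw [ZMod.natCast_self] at h
  push_cast at h
  linear_combination h

lemma isUnit_ofNat_432 (hp : 5 ≤ p) : IsUnit (432 : ZMod (p ^ 2)) := by
  have h2 := (Nat.coprime_primes Nat.prime_two Fact.out).2 (by omega : 2 ≠ p)
  have h3 := (Nat.coprime_primes Nat.prime_three Fact.out).2 (by omega : 3 ≠ p)
  exact_mod_cast (ZMod.isUnit_iff_coprime 432 (p ^ 2)).2
    (((h2.pow_left 4).mul_left (h3.pow_left 3)).pow_right 2)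

end Supercongruence

/-- For any prime `p ≥ 5`,
`∑_{k=0}^{p-1} C(6k,3k) C(3k,k) / 432^k ≡ (-1/p) (mod p^2)`, stated in `ZMod (p^2)`. -/
theorem rv_supercongruence_432 (p : ℕ) [Fact p.Prime] (hp : 5 ≤ p) :
    ∑ k ∈ Finset.range p,
        ((Nat.choose (6 * k) (3 * k) : ZMod (p ^ 2)) * (Nat.choose (3 * k) k : ZMod (p ^ 2)) *
          ((432 : ZMod (p ^ 2))⁻¹) ^ k)
      = (legendreSym p (-1) : ZMod (p ^ 2)) := by
  open Supercongruence in
  have hx := six_mul_cast_sq_sub_one_div_six hp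
  have hy : 6 * ((5 * ((p ^ 2 - 1) / 6) : ℕ) : ZMod (p ^ 2)) = -5 := by
    push_cast at hx ⊢
    linear_combination 5 * hx
  have hfact : ∀ k ∈ range p, IsUnit (k ! : ZMod (p ^ 2)) := fun k hk =>
    (ZMod.isUnit_natCast_iff_not_dvd_pow Fact.out two_pos).2
      (by simpa [(Fact.out : p.Prime).dvd_factorial] using hk)
  rw [sum_congr rfl fun k hk =>
      cast_choose_six_mul_mul_choose_mul_inv_pow hx hy (isUnit_ofNat_432 hp) (hfact k hk),
    sum_cast_choose_mul_choose_of_add_eq_sq_sub_one (by omega)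
      (by have := six_mul_div_six_add_one_eq_sq hp; omega),
    ← neg_one_pow_mod_eq_legendreSym hp]
  norm_cast
end

section
/- Let p be an odd prime. Then, as polynomials in x over the field Q[q]/([p]^2 viewed appropriately), the congruence holds coefficientwise: ∑_{k=0}^{p-1} ((q;q^2)_k^2 / (q^2;q^2)_k^2) x^k ≡ ∑_{k=0}^{(p-1)/2} (qbinom((p-1)/2, k; q^2))^2 q^{-pk+k^2} (-x)^k (x;q^2)_{(p-1)/2 - k} (mod [p]^2), where each coefficient congruence means the difference of the coefficients, which are rational functions of q with denominator coprime to [p], lies in the ideal generated by [p]^2 in Q[q] localized at [p]. -/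
open Polynomial Finset

/-- The variable `q` as an element of the field of rational functions over `ℚ`. -/
noncomputable def q : RatFunc ℚ := RatFunc.X

/-- The q-shifted factorial `(a; Q)_n = (1-a)(1-aQ)⋯(1-aQ^{n-1})`. -/
noncomputable def qPoch (a Q : RatFunc ℚ) (n : ℕ) : RatFunc ℚ :=
  ∏ i ∈ Finset.range n, (1 - a * Q ^ i)

/-- The q-integer `[p] = 1 + q + ⋯ + q^{p-1}`. -/
noncomputable def qInt (p : ℕ) : RatFunc ℚ := ∑ i ∈ Finset.range p, q ^ i

/-- The Gaussian binomial coefficient in base `Q`. -/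
noncomputable def qBinom (n k : ℕ) (Q : RatFunc ℚ) : RatFunc ℚ :=
  qPoch (Q ^ (n - k + 1)) Q k / qPoch Q Q k

/-- `ModQ r p A B` : the difference `A - B` lies in the ideal generated by `[p]^r`
in the localization of `ℚ[q]` at the irreducible polynomial `[p]`;
concretely `(A - B) * b = [p]^r * a` for polynomials `a b` with `[p] ∤ b`. -/
def ModQ (r p : ℕ) (A B : RatFunc ℚ) : Prop :=
  ∃ a b : Polynomial ℚ, ¬ ((∑ i ∈ Finset.range p, Polynomial.X ^ i) ∣ b) ∧
    (A - B) * algebraMap (Polynomial ℚ) (RatFunc ℚ) b =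
      qInt p ^ r * algebraMap (Polynomial ℚ) (RatFunc ℚ) a

/-! Write `p = 2n + 1` and `Q = q²`. For `j ≤ n`, q-Vandermonde together with
`[n,k][n-k,j-k] = [n,j][j,k]` collapses the coefficient of `x^j` on the right to
`(-1)^j Q^(C(j,2) - nj) [n,j] [n+j,j]`, so that both coefficients become quotients by
`Q^(nj) (Q;Q)_j²` of products over `i < j`, namely of `Q^n (1 - qQ^i)²` on the left and of
`-Q^i (1 - Q^(n-i)) (1 - Q^(n+i+1))` on the right. Factor by factor these differ by
`Q^i (q^p - 1)² = Q^i (q - 1)² [p]²`, so the products agree modulo `[p]²`, and the denominator is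
prime to `[p]` since `p ∤ 2i` for `0 < i < p`. For `n < j < p` the right coefficient vanishes,
while `(q;Q)_j` contains the factor `1 - q^p`, so the left one is divisible by `[p]²`. -/

section GaussianBinomial

variable {F : Type*} [Field F]

def qFactorial (Q : F) (m : ℕ) : F := ∏ i ∈ range m, (1 - Q ^ (i + 1))

def gaussBinom (Q : F) (m k : ℕ) : F :=
  if k ≤ m then qFactorial Q m / (qFactorial Q k * qFactorial Q (m - k)) else 0

variable {Q : F}

lemma qFactorial_zero (Q : F) : qFactorial Q 0 = 1 := prod_range_zero _

lemma qFactorial_succ (Q : F) (m : ℕ) :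
    qFactorial Q (m + 1) = qFactorial Q m * (1 - Q ^ (m + 1)) :=
  prod_range_succ _ _

lemma prod_one_sub_mul_pow (Q : F) (m : ℕ) : ∏ i ∈ range m, (1 - Q * Q ^ i) = qFactorial Q m :=
  prod_congr rfl fun i _ => by rw [pow_succ']

lemma qFactorial_ne_zero (hQ : ∀ i, Q ^ (i + 1) ≠ 1) (m : ℕ) : qFactorial Q m ≠ 0 :=
  prod_ne_zero_iff.2 fun i _ => sub_ne_zero.2 (hQ i).symm

lemma qFactorial_mul_prod_one_sub_pow (Q : F) (d k : ℕ) :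
    qFactorial Q d * ∏ i ∈ range k, (1 - Q ^ (d + i + 1)) = qFactorial Q (d + k) := by
  rw [qFactorial, qFactorial, prod_range_add]

lemma qFactorial_sub_mul_prod_one_sub_pow (Q : F) {n j : ℕ} (h : j ≤ n) :
    qFactorial Q (n - j) * ∏ i ∈ range j, (1 - Q ^ (n - i)) = qFactorial Q n := by
  conv_rhs => rw [← Nat.sub_add_cancel h, ← qFactorial_mul_prod_one_sub_pow, ← prod_range_reflect]
  congr 1
  refine prod_congr rfl fun i hi => ?_
  rw [mem_range] at hi
  congr 2
  omega

lemma gaussBinom_of_le {m k : ℕ} (h : k ≤ m) :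
    gaussBinom Q m k = qFactorial Q m / (qFactorial Q k * qFactorial Q (m - k)) :=
  if_pos h

lemma gaussBinom_of_lt {m k : ℕ} (h : m < k) : gaussBinom Q m k = 0 :=
  if_neg (Nat.not_le.2 h)

lemma gaussBinom_zero_right (hQ : ∀ i, Q ^ (i + 1) ≠ 1) (m : ℕ) : gaussBinom Q m 0 = 1 := by
  rw [gaussBinom_of_le m.zero_le, Nat.sub_zero, qFactorial_zero, one_mul,
    div_self (qFactorial_ne_zero hQ m)]

lemma gaussBinom_self (hQ : ∀ i, Q ^ (i + 1) ≠ 1) (m : ℕ) : gaussBinom Q m m = 1 := by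
  rw [gaussBinom_of_le le_rfl, Nat.sub_self, qFactorial_zero, mul_one,
    div_self (qFactorial_ne_zero hQ m)]

lemma gaussBinom_sub {m k : ℕ} (h : k ≤ m) : gaussBinom Q m (m - k) = gaussBinom Q m k := by
  rw [gaussBinom_of_le h, gaussBinom_of_le (Nat.sub_le m k), Nat.sub_sub_self h, mul_comm]

lemma gaussBinom_succ_succ (hQ : ∀ i, Q ^ (i + 1) ≠ 1) (m k : ℕ) :
    gaussBinom Q (m + 1) (k + 1) = Q ^ (k + 1) * gaussBinom Q m (k + 1) + gaussBinom Q m k := by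
  rcases lt_trichotomy k m with h | rfl | h
  · obtain ⟨d, rfl⟩ := Nat.exists_eq_add_of_lt h
    rw [gaussBinom_of_le (by omega), gaussBinom_of_le (by omega), gaussBinom_of_le (by omega),
      show k + d + 1 + 1 - (k + 1) = d + 1 by omega, show k + d + 1 - (k + 1) = d by omega,
      show k + d + 1 - k = d + 1 by omega, qFactorial_succ _ (k + d + 1), qFactorial_succ _ d,
      qFactorial_succ _ k]
    field_simp [qFactorial_ne_zero hQ, sub_ne_zero.2 (hQ k).symm, sub_ne_zero.2 (hQ d).symm]
    ring
  · rw [gaussBinom_self hQ, gaussBinom_self hQ, gaussBinom_of_lt (Nat.lt_succ_self k), mul_zero,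
      zero_add]
  · rw [gaussBinom_of_lt (by omega), gaussBinom_of_lt (by omega), gaussBinom_of_lt h, mul_zero,
      add_zero]

theorem coeff_prod_one_sub_C_mul_X (hQ : ∀ i, Q ^ (i + 1) ≠ 1) (m : ℕ) (c : F) (j : ℕ) :
    (∏ i ∈ range m, (1 - C (c * Q ^ i) * X)).coeff j
      = (-c) ^ j * Q ^ j.choose 2 * gaussBinom Q m j := by
  induction m generalizing c j with
  | zero =>
    rcases j with _ | j
    · simp [gaussBinom_self hQ]
    · simp [gaussBinom_of_lt (Nat.succ_pos j), coeff_one]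
  | succ m ih =>
    have hshift : ∀ i, c * Q ^ (i + 1) = c * Q * Q ^ i := fun i => by ring
    rw [prod_range_succ', pow_zero, mul_one]
    simp_rw [hshift]
    rw [mul_one_sub, coeff_sub, mul_left_comm, coeff_C_mul]
    rcases j with _ | j
    · rw [coeff_mul_X_zero, ih, gaussBinom_zero_right hQ, gaussBinom_zero_right hQ]
      ring
    · rw [coeff_mul_X, ih, ih, gaussBinom_succ_succ hQ, Nat.choose_succ_succ',
        Nat.choose_one_right]
      ring

-- q-Vandermonde: compare coefficients in `(x; Q)_(a+b) = (x; Q)_a (Q^a x; Q)_b`.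
theorem gaussBinom_add (hQ : ∀ i, Q ^ (i + 1) ≠ 1) (a b j : ℕ) :
    Q ^ j.choose 2 * gaussBinom Q (a + b) j
      = ∑ k ∈ range (j + 1),
          Q ^ (k.choose 2 + (j - k).choose 2 + a * (j - k)) * gaussBinom Q a k
            * gaussBinom Q b (j - k) := by
  have hsplit := congrArg (coeff · j) (prod_range_add (fun i => 1 - C (-1 * Q ^ i) * X) a b)
  simp_rw [pow_add, ← mul_assoc] at hsplit
  simp only [coeff_mul, Nat.sum_antidiagonal_eq_sum_range_succ_mk,
    coeff_prod_one_sub_C_mul_X hQ] at hsplit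
  simp only [neg_neg, one_pow, one_mul, neg_mul, ← pow_mul] at hsplit
  rw [hsplit]
  refine sum_congr rfl fun k _ => ?_
  rw [pow_add, pow_add]
  ring

lemma gaussBinom_mul_gaussBinom (hQ : ∀ i, Q ^ (i + 1) ≠ 1) {n j k : ℕ} (hkj : k ≤ j)
    (hjn : j ≤ n) :
    gaussBinom Q n k * gaussBinom Q (n - k) (j - k) = gaussBinom Q n j * gaussBinom Q j k := by
  rw [gaussBinom_of_le (hkj.trans hjn), gaussBinom_of_le (by omega), gaussBinom_of_le hjn,
    gaussBinom_of_le hkj, show n - k - (j - k) = n - j by omega]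
  have := qFactorial_ne_zero hQ
  rw [div_mul_div_comm, div_mul_div_comm, div_eq_div_iff (by simp [this]) (by simp [this])]
  ring

theorem sum_pow_mul_gaussBinom_sq_mul_gaussBinom (hQ : ∀ i, Q ^ (i + 1) ≠ 1) {n j : ℕ}
    (hjn : j ≤ n) :
    ∑ k ∈ range (j + 1), Q ^ (k.choose 2 + (j - k).choose 2 + n * (j - k))
        * gaussBinom Q n k ^ 2 * gaussBinom Q (n - k) (j - k)
      = Q ^ j.choose 2 * gaussBinom Q n j * gaussBinom Q (n + j) j := by
  rw [mul_assoc, mul_left_comm, gaussBinom_add hQ, mul_sum]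
  refine sum_congr rfl fun k hk => ?_
  have hkj : k ≤ j := Nat.lt_succ_iff.1 (mem_range.1 hk)
  rw [gaussBinom_sub hkj]
  linear_combination (Q ^ (k.choose 2 + (j - k).choose 2 + n * (j - k)) * gaussBinom Q n k)
    * gaussBinom_mul_gaussBinom hQ hkj hjn

lemma prod_neg_pow_mul_one_sub_mul_one_sub (hQ : ∀ i, Q ^ (i + 1) ≠ 1) {n j : ℕ} (hjn : j ≤ n) :
    ∏ i ∈ range j, -(Q ^ i * (1 - Q ^ (n - i)) * (1 - Q ^ (n + i + 1)))
      = (-1) ^ j * Q ^ j.choose 2 * gaussBinom Q n j * gaussBinom Q (n + j) j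
          * qFactorial Q j ^ 2 := by
  have hlow := qFactorial_sub_mul_prod_one_sub_pow Q hjn
  have hhigh := qFactorial_mul_prod_one_sub_pow Q n j
  rw [prod_neg, card_range, prod_mul_distrib, prod_mul_distrib, prod_pow_eq_pow_sum, sum_range_id,
    ← Nat.choose_two_right, gaussBinom_of_le hjn, gaussBinom_of_le (Nat.le_add_left j n),
    Nat.add_sub_cancel]
  have := qFactorial_ne_zero hQ
  rw [eq_div_of_mul_eq (this _) ((mul_comm _ _).trans hlow),
    eq_div_of_mul_eq (this _) ((mul_comm _ _).trans hhigh)]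
  field_simp
  rw [div_eq_div_iff (by simp [this]) (by simp [this])]
  ring

lemma zpow_sq_sub_mul_pow_mul {r : F} (hr : r ≠ 0) (n k : ℕ) :
    r ^ ((k : ℤ) ^ 2 - ((2 * n + 1 : ℕ) : ℤ) * k) * (r ^ 2) ^ (n * k) = (r ^ 2) ^ k.choose 2 := by
  have hchoose : ((2 * k.choose 2 : ℕ) : ℤ) = (k : ℤ) ^ 2 - k := by
    rw [Nat.choose_two_right, Nat.mul_div_cancel' (Nat.even_mul_pred_self k).two_dvd]
    rcases k with _ | k
    · simp
    · push_cast [Nat.add_sub_cancel]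
      ring
  rw [← pow_mul, ← pow_mul, ← zpow_natCast, ← zpow_natCast r (2 * k.choose 2), hchoose,
    ← zpow_add₀ hr]
  congr 1
  push_cast
  ring

lemma pow_mul_sum_ite_gaussBinom {r : F} (hr : r ≠ 0)
    (hQ : ∀ i, (r ^ 2) ^ (i + 1) ≠ 1) {n j : ℕ} (hjn : j ≤ n) :
    (r ^ 2) ^ (n * j) * ∑ k ∈ range (n + 1), (if k ≤ j then
        gaussBinom (r ^ 2) n k ^ 2 * r ^ ((k : ℤ) ^ 2 - ((2 * n + 1 : ℕ) : ℤ) * k) * (-1) ^ j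
          * (r ^ 2) ^ (j - k).choose 2 * gaussBinom (r ^ 2) (n - k) (j - k) else 0)
      = (-1) ^ j * ((r ^ 2) ^ j.choose 2 * gaussBinom (r ^ 2) n j
          * gaussBinom (r ^ 2) (n + j) j) := by
  have hsub : range (j + 1) ⊆ range (n + 1) := range_subset_range.2 (by omega)
  rw [← sum_subset hsub fun k _ hk => if_neg (by rw [mem_range] at hk; omega),
    ← sum_pow_mul_gaussBinom_sq_mul_gaussBinom hQ hjn, mul_sum, mul_sum]
  refine sum_congr rfl fun k hk => ?_
  have hkj : k ≤ j := Nat.lt_succ_iff.1 (mem_range.1 hk)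
  rw [if_pos hkj, show n * j = n * k + n * (j - k) by rw [← Nat.mul_add, Nat.add_sub_cancel' hkj],
    pow_add, pow_add, pow_add]
  linear_combination ((-1) ^ j * (r ^ 2) ^ (n * (j - k)) * (r ^ 2) ^ (j - k).choose 2
    * gaussBinom (r ^ 2) n k ^ 2 * gaussBinom (r ^ 2) (n - k) (j - k))
    * zpow_sq_sub_mul_pow_mul hr n k

lemma coeff_sum_C_mul_neg_X_pow_mul_prod (hQ : ∀ i, Q ^ (i + 1) ≠ 1) (u : ℕ → F) (m j : ℕ) :
    (∑ k ∈ range (m + 1), C (u k) * (-X) ^ k * ∏ i ∈ range (m - k), (1 - C (Q ^ i) * X)).coeff j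
      = ∑ k ∈ range (m + 1), if k ≤ j then
          u k * (-1) ^ j * Q ^ (j - k).choose 2 * gaussBinom Q (m - k) (j - k) else 0 := by
  rw [finsetSum_coeff]
  refine sum_congr rfl fun k _ => ?_
  have hprod := coeff_prod_one_sub_C_mul_X hQ (m - k) 1 (j - k)
  simp only [one_mul] at hprod
  have hpoly : C (u k) * (-X) ^ k * ∏ i ∈ range (m - k), (1 - C (Q ^ i) * X)
      = C (u k * (-1) ^ k) * (X ^ k * ∏ i ∈ range (m - k), (1 - C (Q ^ i) * X)) := by
    simp only [map_mul, map_pow, map_neg, map_one]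
    ring
  rw [hpoly, coeff_C_mul, coeff_X_pow_mul']
  split_ifs with hkj
  · obtain ⟨d, rfl⟩ := Nat.exists_eq_add_of_le hkj
    rw [hprod, Nat.add_sub_cancel_left, pow_add]
    ring
  · rw [mul_zero]

lemma sum_ite_gaussBinom_sub_eq_zero (u : ℕ → F) {n j : ℕ} (hnj : n < j) :
    ∑ k ∈ range (n + 1), (if k ≤ j then
      u k * (-1) ^ j * Q ^ (j - k).choose 2 * gaussBinom Q (n - k) (j - k) else 0) = 0 :=
  sum_eq_zero fun k hk => by
    rw [mem_range] at hk
    rw [gaussBinom_of_lt (by omega), mul_zero, ite_self]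

end GaussianBinomial

lemma coeff_sum_C_mul_X_pow {R : Type*} [Semiring R] (g : ℕ → R) (p j : ℕ) :
    (∑ k ∈ range p, C (g k) * X ^ k).coeff j = if j < p then g j else 0 := by
  simp only [finsetSum_coeff, coeff_C_mul_X_pow, sum_ite_eq, mem_range]

lemma dvd_prod_sub_prod {R ι : Type*} [CommRing R] {c : R} (s : Finset ι) {f g : ι → R}
    (h : ∀ i ∈ s, c ∣ f i - g i) : c ∣ ∏ i ∈ s, f i - ∏ i ∈ s, g i := by
  rw [← Ideal.mem_span_singleton, ← Ideal.Quotient.eq, map_prod, map_prod]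
  exact prod_congr rfl fun i hi => Ideal.Quotient.eq.2 (Ideal.mem_span_singleton.2 (h i hi))

lemma geomSum_not_dvd_of_aeval_ne_zero {R A : Type*} [CommRing R] [CommRing A] [IsDomain A]
    [Algebra R A] {p : ℕ} (hp : 1 < p) {ζ : A} (hζ : IsPrimitiveRoot ζ p) {b : R[X]}
    (hb : aeval ζ b ≠ 0) : ¬ (∑ i ∈ range p, X ^ i) ∣ b := by
  rintro ⟨t, rfl⟩
  apply hb
  simp [map_sum, hζ.geom_sum_eq_zero hp]

lemma geomSum_not_dvd_pow_mul_prod_sq {n j : ℕ} (hp : (2 * n + 1).Prime) (hj : j < 2 * n + 1)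
    (e : ℕ) :
    ¬ (∑ i ∈ range (2 * n + 1), X ^ i) ∣
      ((X : ℚ[X]) ^ 2) ^ e * (∏ i ∈ range j, (1 - X ^ 2 * (X ^ 2) ^ i)) ^ 2 := by
  have hζ := Complex.isPrimitiveRoot_exp (2 * n + 1) hp.ne_zero
  refine geomSum_not_dvd_of_aeval_ne_zero hp.one_lt hζ ?_
  simp only [map_mul, map_pow, map_prod, map_sub, map_one, aeval_X]
  refine mul_ne_zero (pow_ne_zero _ (pow_ne_zero _ (hζ.ne_zero hp.ne_zero)))
    (pow_ne_zero _ (prod_ne_zero_iff.2 fun i hi => ?_))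
  rw [sub_ne_zero, ne_comm, ← pow_succ', ← pow_mul, Ne, hζ.pow_eq_one_iff_dvd]
  intro hdvd
  rw [mem_range] at hi
  rcases (Nat.Prime.dvd_mul hp).1 hdvd with h2 | h
  · have := Nat.le_of_dvd two_pos h2
    have := hp.two_le
    omega
  · have := Nat.le_of_dvd i.succ_pos h
    omega

lemma sq_pow_mul_one_sub_sq_add {R : Type*} [CommRing R] (x : R) {i n : ℕ} (h : i ≤ n) :
    (x ^ 2) ^ n * (1 - x * (x ^ 2) ^ i) ^ 2
        + (x ^ 2) ^ i * (1 - (x ^ 2) ^ (n - i)) * (1 - (x ^ 2) ^ (n + i + 1))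
      = (x ^ 2) ^ i * (x ^ (2 * n + 1) - 1) ^ 2 := by
  obtain ⟨d, rfl⟩ := Nat.exists_eq_add_of_le h
  rw [Nat.add_sub_cancel_left]
  ring

lemma algebraMap_X_eq_q : algebraMap ℚ[X] (RatFunc ℚ) X = q := RatFunc.algebraMap_X

lemma ModQ.of_mul_eq {r p : ℕ} {A B : RatFunc ℚ} {f g b : ℚ[X]}
    (hb : ¬ (∑ i ∈ range p, X ^ i) ∣ b)
    (hA : A * algebraMap ℚ[X] (RatFunc ℚ) b = algebraMap ℚ[X] (RatFunc ℚ) f)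
    (hB : B * algebraMap ℚ[X] (RatFunc ℚ) b = algebraMap ℚ[X] (RatFunc ℚ) g)
    (hfg : (∑ i ∈ range p, X ^ i) ^ r ∣ f - g) : ModQ r p A B := by
  obtain ⟨t, ht⟩ := hfg
  refine ⟨t, b, hb, ?_⟩
  rw [sub_mul, hA, hB, ← map_sub, ht, map_mul, map_pow, map_sum]
  simp only [map_pow, algebraMap_X_eq_q, qInt]

lemma ModQ.refl {p : ℕ} (hp : 1 < p) (r : ℕ) (A : RatFunc ℚ) : ModQ r p A A :=
  ⟨0, 1, geomSum_not_dvd_of_aeval_ne_zero hp (Complex.isPrimitiveRoot_exp p (by omega)) (by simp),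
    by simp⟩

lemma q_sq_pow_succ_ne_one (i : ℕ) : (q ^ 2) ^ (i + 1) ≠ 1 := by
  intro h
  have hX : (X ^ (2 * (i + 1)) - 1 : ℚ[X]) ≠ 0 := by
    simpa using X_pow_sub_C_ne_zero (R := ℚ) (by omega : 0 < 2 * (i + 1)) 1
  apply hX
  apply IsFractionRing.injective ℚ[X] (RatFunc ℚ)
  rw [map_sub, map_pow, map_one, map_zero, algebraMap_X_eq_q, pow_mul, h, sub_self]

lemma qBinom_eq_gaussBinom {Q : RatFunc ℚ} (hQ : ∀ i, Q ^ (i + 1) ≠ 1) {n k : ℕ} (h : k ≤ n) :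
    qBinom n k Q = gaussBinom Q n k := by
  have hfac := qFactorial_mul_prod_one_sub_pow Q (n - k) k
  rw [Nat.sub_add_cancel h] at hfac
  simp only [qBinom, qPoch, prod_one_sub_mul_pow, ← pow_add, Nat.add_right_comm (n - k) 1]
  rw [gaussBinom_of_le h, ← hfac, mul_comm (qFactorial Q k),
    mul_div_mul_left _ _ (qFactorial_ne_zero hQ _)]

lemma modQ_of_le {n j : ℕ} (hp : (2 * n + 1).Prime) (hjn : j ≤ n) :
    ModQ 2 (2 * n + 1) (qPoch q (q ^ 2) j ^ 2 / qPoch (q ^ 2) (q ^ 2) j ^ 2)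
      (∑ k ∈ range (n + 1), if k ≤ j then
        qBinom n k (q ^ 2) ^ 2 * q ^ ((k : ℤ) ^ 2 - ((2 * n + 1 : ℕ) : ℤ) * k) * (-1) ^ j
          * (q ^ 2) ^ (j - k).choose 2 * gaussBinom (q ^ 2) (n - k) (j - k) else 0) := by
  refine ModQ.of_mul_eq (geomSum_not_dvd_pow_mul_prod_sq hp (show j < 2 * n + 1 by omega) (n * j))
    (f := ∏ i ∈ range j, (X ^ 2) ^ n * (1 - X * (X ^ 2) ^ i) ^ 2)
    (g := ∏ i ∈ range j, -((X ^ 2) ^ i * (1 - (X ^ 2) ^ (n - i)) * (1 - (X ^ 2) ^ (n + i + 1))))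
    ?_ ?_ ?_
  · simp only [map_mul, map_pow, map_prod, map_sub, map_one, algebraMap_X_eq_q, prod_mul_distrib,
      prod_const, card_range, prod_pow, qPoch, prod_one_sub_mul_pow]
    rw [pow_mul]
    field_simp [qFactorial_ne_zero q_sq_pow_succ_ne_one j]
  · simp only [map_mul, map_pow, map_prod, map_sub, map_one, map_neg, algebraMap_X_eq_q,
      prod_one_sub_mul_pow]
    rw [prod_neg_pow_mul_one_sub_mul_one_sub q_sq_pow_succ_ne_one hjn,
      sum_congr rfl fun k hk => by
        rw [qBinom_eq_gaussBinom q_sq_pow_succ_ne_one (Nat.lt_succ_iff.1 (mem_range.1 hk))]]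
    linear_combination qFactorial (q ^ 2) j ^ 2
      * pow_mul_sum_ite_gaussBinom RatFunc.X_ne_zero q_sq_pow_succ_ne_one hjn
  · refine dvd_prod_sub_prod _ fun i hi => ?_
    rw [mem_range] at hi
    rw [sub_neg_eq_add, sq_pow_mul_one_sub_sq_add X (by omega), ← geom_sum_mul, mul_pow]
    exact dvd_mul_of_dvd_right (dvd_mul_right _ _) _

lemma modQ_of_lt {n j : ℕ} (hp : (2 * n + 1).Prime) (hnj : n < j) (hj : j < 2 * n + 1) :
    ModQ 2 (2 * n + 1) (qPoch q (q ^ 2) j ^ 2 / qPoch (q ^ 2) (q ^ 2) j ^ 2) 0 := by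
  refine ModQ.of_mul_eq (geomSum_not_dvd_pow_mul_prod_sq hp hj 0)
    (f := (∏ i ∈ range j, (1 - X * (X ^ 2) ^ i)) ^ 2) (g := 0) ?_ (by simp) ?_
  · simp only [map_mul, map_pow, map_prod, map_sub, map_one, algebraMap_X_eq_q, qPoch,
      prod_one_sub_mul_pow]
    field_simp [qFactorial_ne_zero q_sq_pow_succ_ne_one j]
  · rw [sub_zero]
    refine pow_dvd_pow_of_dvd (dvd_trans ?_ (dvd_prod_of_mem _ (mem_range.2 hnj))) 2
    rw [← pow_mul, ← pow_succ', ← neg_sub, ← geom_sum_mul, dvd_neg]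
    exact dvd_mul_right _ _

/-- q-analogue of Tauraso's congruence: coefficientwise in `x`,
`∑_{k<p} ((q;q²)_k²/(q²;q²)_k²) x^k ≡
 ∑_{k≤(p-1)/2} qbinom((p-1)/2,k;q²)² q^{k²-pk} (-x)^k (x;q²)_{(p-1)/2-k} (mod [p]²)`. -/
theorem q_tauraso (p : ℕ) (hp : p.Prime) (hodd : Odd p) :
    ∀ j : ℕ, ModQ 2 p
      ((∑ k ∈ Finset.range p,
          Polynomial.C (qPoch q (q ^ 2) k ^ 2 / qPoch (q ^ 2) (q ^ 2) k ^ 2) *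
            Polynomial.X ^ k : Polynomial (RatFunc ℚ)).coeff j)
      ((∑ k ∈ Finset.range ((p - 1) / 2 + 1),
          Polynomial.C (qBinom ((p - 1) / 2) k (q ^ 2) ^ 2 * q ^ ((k : ℤ) ^ 2 - p * k)) *
            (-Polynomial.X) ^ k *
            ∏ i ∈ Finset.range ((p - 1) / 2 - k),
              (1 - Polynomial.C ((q ^ 2) ^ i) * Polynomial.X) :
          Polynomial (RatFunc ℚ)).coeff j) := by
  intro j
  obtain ⟨n, rfl⟩ := hodd
  rw [show (2 * n + 1 - 1) / 2 = n by omega, coeff_sum_C_mul_X_pow,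
    coeff_sum_C_mul_neg_X_pow_mul_prod q_sq_pow_succ_ne_one]
  rcases le_or_gt j n with hjn | hnj
  · rw [if_pos (by omega)]
    exact modQ_of_le hp hjn
  · rw [sum_ite_gaussBinom_sub_eq_zero _ hnj]
    split_ifs with hj
    · exact modQ_of_lt hp hnj hj
    · exact ModQ.refl hp.one_lt 2 0
end

section
/- Let p be an odd prime. Then ∑_{k=0}^{p-1} (q;q^2)_k^2 / (q^2;q^2)_k^2 ≡ (-1/p) · q^{(1-p^2)/4} (mod [p]^2), where the congruence is in the localization of Q[q] at the irreducible polynomial [p] = 1 + q + ··· + q^{p-1}, and (-1/p) is the Legendre symbol. -/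
open Polynomial Finset

/-!
Write `p = 2n + 1`. Factorwise,
`(1 - q^{2j+1})² - (1 - q^{2j+1-p}) (1 - q^{2j+1+p}) = q^{2j+1-p} (1 - q^p)²`, and `[p]` divides
`1 - q^p`; as the denominators `(q²;q²)_k`, `k < p`, are prime to `[p]`, the `k`-th summand is
congruent modulo `[p]²` to `(q^{1-p};q²)_k (q^{1+p};q²)_k / (q²;q²)_k²`. This sum terminates at
`k = n`, and the q-Chu–Vandermonde summation in base `Q = q²` evaluates it to
`(-1)^n q^{-n(n+1)} = (-1/p) q^{(1-p²)/4}`.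
-/

section Regular

variable {K L : Type*} [Field K] [Field L] [Algebra K L]

/-- The rational functions with a representative whose denominator does not vanish at `ζ`; for
`K = ℚ` and `ζ` a primitive `p`-th root of unity this is the localization of `ℚ[q]` at `[p]`. -/
def regularAt (ζ : L) : Subring (RatFunc K) where
  carrier := {A | ∃ a b : K[X], aeval ζ b ≠ 0 ∧
    A * algebraMap K[X] (RatFunc K) b = algebraMap K[X] (RatFunc K) a}
  mul_mem' := by
    rintro A B ⟨a, b, hb, hA⟩ ⟨c, d, hd, hB⟩
    refine ⟨a * c, b * d, by simp [hb, hd], ?_⟩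
    rw [map_mul, map_mul, ← hA, ← hB]
    ring
  one_mem' := ⟨1, 1, by simp, by simp⟩
  add_mem' := by
    rintro A B ⟨a, b, hb, hA⟩ ⟨c, d, hd, hB⟩
    refine ⟨a * d + b * c, b * d, by simp [hb, hd], ?_⟩
    simp only [map_add, map_mul, ← hA, ← hB]
    ring
  zero_mem' := ⟨0, 1, by simp, by simp⟩
  neg_mem' := by
    rintro A ⟨a, b, hb, hA⟩
    exact ⟨-a, b, hb, by rw [map_neg, ← hA, neg_mul]⟩

variable {ζ : L}

theorem algebraMap_mem_regularAt (a : K[X]) : algebraMap K[X] (RatFunc K) a ∈ regularAt ζ :=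
  ⟨a, 1, by simp, by simp⟩

theorem inv_algebraMap_mem_regularAt {b : K[X]} (hb : aeval ζ b ≠ 0) :
    (algebraMap K[X] (RatFunc K) b)⁻¹ ∈ regularAt ζ := by
  have hb0 : algebraMap K[X] (RatFunc K) b ≠ 0 :=
    RatFunc.algebraMap_ne_zero (by rintro rfl; exact hb (map_zero _))
  exact ⟨1, b, hb, by rw [inv_mul_cancel₀ hb0, map_one]⟩

def DvdAt (ζ : L) (x A : RatFunc K) : Prop := ∃ c ∈ regularAt ζ, A = x * c

variable {x A B : RatFunc K}

theorem DvdAt.add (hA : DvdAt ζ x A) (hB : DvdAt ζ x B) : DvdAt ζ x (A + B) := by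
  obtain ⟨c, hc, rfl⟩ := hA
  obtain ⟨d, hd, rfl⟩ := hB
  exact ⟨c + d, add_mem hc hd, (mul_add x c d).symm⟩

theorem DvdAt.mul_right (hA : DvdAt ζ x A) (hB : B ∈ regularAt ζ) : DvdAt ζ x (A * B) := by
  obtain ⟨c, hc, rfl⟩ := hA
  exact ⟨c * B, mul_mem hc hB, mul_assoc x c B⟩

theorem DvdAt.sum {ι : Type*} {s : Finset ι} {f : ι → RatFunc K}
    (h : ∀ i ∈ s, DvdAt ζ x (f i)) : DvdAt ζ x (∑ i ∈ s, f i) :=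
  Finset.sum_induction f (DvdAt ζ x) (fun _ _ => DvdAt.add)
    ⟨0, zero_mem _, (mul_zero x).symm⟩ h

theorem DvdAt.prod_sub_prod {ι : Type*} [DecidableEq ι] {s : Finset ι} {f g : ι → RatFunc K}
    (hf : ∀ i ∈ s, f i ∈ regularAt ζ) (hg : ∀ i ∈ s, g i ∈ regularAt ζ)
    (h : ∀ i ∈ s, DvdAt ζ x (f i - g i)) : DvdAt ζ x (∏ i ∈ s, f i - ∏ i ∈ s, g i) := by
  induction s using Finset.induction_on with
  | empty => exact ⟨0, zero_mem _, by simp⟩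
  | insert a s ha ih =>
    simp only [Finset.forall_mem_insert] at hf hg h
    have key : ∏ i ∈ insert a s, f i - ∏ i ∈ insert a s, g i =
        (f a - g a) * ∏ i ∈ s, f i + (∏ i ∈ s, f i - ∏ i ∈ s, g i) * g a := by
      rw [Finset.prod_insert ha, Finset.prod_insert ha]
      ring
    rw [key]
    exact (h.1.mul_right (prod_mem hf.2)).add ((ih hf.2 hg.2 h.2).mul_right hg.1)

end Regular

section Cyclotomic

variable {L : Type*} [Field L] [Algebra ℚ L] {ζ : L}

theorem q_eq_algebraMap : q = algebraMap ℚ[X] (RatFunc ℚ) X := RatFunc.algebraMap_X.symm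

theorem q_ne_zero : q ≠ 0 := RatFunc.X_ne_zero

theorem q_sq_pow_ne_one {m : ℕ} (hm : m ≠ 0) : (q ^ 2) ^ m ≠ 1 := by
  rw [← pow_mul, q_eq_algebraMap, ← map_pow, ← map_one (algebraMap ℚ[X] (RatFunc ℚ)), Ne,
    (RatFunc.algebraMap_injective ℚ).eq_iff]
  intro h
  simpa [hm] using congrArg (Polynomial.natDegree) h

theorem q_pow_mem_regularAt (m : ℕ) : q ^ m ∈ regularAt ζ :=
  pow_mem (q_eq_algebraMap ▸ algebraMap_mem_regularAt X) m

theorem inv_q_pow_mem_regularAt (hζ : ζ ≠ 0) (m : ℕ) : (q ^ m)⁻¹ ∈ regularAt ζ := by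
  rw [q_eq_algebraMap, ← map_pow]
  exact inv_algebraMap_mem_regularAt (by simpa using pow_ne_zero m hζ)

theorem inv_one_sub_q_pow_mem_regularAt {m : ℕ} (hζ : ζ ^ m ≠ 1) :
    (1 - q ^ m)⁻¹ ∈ regularAt ζ := by
  rw [q_eq_algebraMap, ← map_pow, ← map_one (algebraMap ℚ[X] (RatFunc ℚ)), ← map_sub]
  exact inv_algebraMap_mem_regularAt (by simpa [sub_eq_zero] using hζ.symm)

theorem dvdAt_qInt_one_sub_q_pow (p : ℕ) : DvdAt ζ (qInt p) (1 - q ^ p) :=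
  ⟨1 - q, sub_mem (one_mem _) (pow_one q ▸ q_pow_mem_regularAt 1),
    (geom_sum_mul_neg q p).symm⟩

theorem inv_qPoch_q_sq_mem_regularAt {p k : ℕ} (hζ : IsPrimitiveRoot ζ p) (hp : Odd p)
    (hk : k < p) : (qPoch (q ^ 2) (q ^ 2) k)⁻¹ ∈ regularAt ζ := by
  rw [qPoch, ← Finset.prod_inv_distrib]
  refine prod_mem fun i hi => ?_
  rw [← pow_succ', ← pow_mul]
  refine inv_one_sub_q_pow_mem_regularAt fun h => ?_
  have hdvd : p ∣ i + 1 :=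
    (Nat.coprime_two_right.mpr hp).dvd_of_dvd_mul_left ((hζ.pow_eq_one_iff_dvd _).mp h)
  have := Nat.le_of_dvd i.succ_pos hdvd
  simp only [Finset.mem_range] at hi
  omega

theorem modQ_of_dvdAt {p r : ℕ} (hζ : IsPrimitiveRoot ζ p) (hp : 1 < p) {A B : RatFunc ℚ}
    (h : DvdAt ζ (qInt p ^ r) (A - B)) : ModQ r p A B := by
  obtain ⟨c, ⟨a, b, hb, hc⟩, hAB⟩ := h
  refine ⟨a, b, ?_, by rw [hAB, mul_assoc, hc]⟩
  rintro ⟨d, rfl⟩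
  apply hb
  simp [hζ.geom_sum_eq_zero hp]

theorem dvdAt_qPoch_sq_sub {y a Q x : RatFunc ℚ} (ha : a ∈ regularAt ζ) (hQ : Q ∈ regularAt ζ)
    (hx : x ∈ regularAt ζ) (hx' : x⁻¹ ∈ regularAt ζ) (hx0 : x ≠ 0) (hy : DvdAt ζ y (1 - x))
    (k : ℕ) : DvdAt ζ (y ^ 2) (qPoch a Q k ^ 2 - qPoch (a * x⁻¹) Q k * qPoch (a * x) Q k) := by
  obtain ⟨c, hc, hxy⟩ := hy
  rw [qPoch, qPoch, qPoch, ← Finset.prod_pow, ← Finset.prod_mul_distrib]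
  have hpow : ∀ i, a * Q ^ i ∈ regularAt ζ := fun i => mul_mem ha (pow_mem hQ i)
  refine DvdAt.prod_sub_prod (fun i _ => pow_mem (sub_mem (one_mem _) (hpow i)) 2)
    (fun i _ => mul_mem (sub_mem (one_mem _) (mul_mem (mul_mem ha hx') (pow_mem hQ i)))
      (sub_mem (one_mem _) (mul_mem (mul_mem ha hx) (pow_mem hQ i)))) fun i _ => ?_
  refine ⟨c ^ 2 * (a * Q ^ i * x⁻¹), mul_mem (pow_mem hc 2) (mul_mem (hpow i) hx'), ?_⟩
  calc (1 - a * Q ^ i) ^ 2 - (1 - a * x⁻¹ * Q ^ i) * (1 - a * x * Q ^ i)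
      = (1 - x) ^ 2 * (a * Q ^ i * x⁻¹) := by field_simp; ring
    _ = y ^ 2 * (c ^ 2 * (a * Q ^ i * x⁻¹)) := by rw [hxy]; ring

end Cyclotomic

section QPochhammer

variable {Q : RatFunc ℚ}

theorem Nat.choose_two_succ (n : ℕ) : (n + 1).choose 2 = n.choose 2 + n := by
  rw [Nat.choose_succ_succ', Nat.choose_one_right, add_comm]

theorem qPoch_zero (a Q : RatFunc ℚ) : qPoch a Q 0 = 1 :=
  Finset.prod_range_zero _

theorem qPoch_succ (a Q : RatFunc ℚ) (k : ℕ) :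
    qPoch a Q (k + 1) = qPoch a Q k * (1 - a * Q ^ k) :=
  Finset.prod_range_succ _ _

theorem qPoch_succ' (a Q : RatFunc ℚ) (k : ℕ) :
    qPoch a Q (k + 1) = qPoch (a * Q) Q k * (1 - a) := by
  rw [qPoch, Finset.prod_range_succ', pow_zero, mul_one, qPoch]
  congr 1
  exact Finset.prod_congr rfl fun i _ => by ring

theorem one_sub_mul_pow_ne_zero (hQ : ∀ m ≠ 0, Q ^ m ≠ 1) (k : ℕ) : 1 - Q * Q ^ k ≠ 0 := by
  rw [← pow_succ', sub_ne_zero]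
  exact (hQ _ k.succ_ne_zero).symm

theorem qPoch_self_ne_zero (hQ : ∀ m ≠ 0, Q ^ m ≠ 1) (k : ℕ) : qPoch Q Q k ≠ 0 :=
  Finset.prod_ne_zero_iff.mpr fun i _ => one_sub_mul_pow_ne_zero hQ i

theorem qPoch_self_add (Q : RatFunc ℚ) (n k : ℕ) :
    qPoch Q Q (n + k) = qPoch Q Q n * qPoch (Q ^ (n + 1)) Q k := by
  rw [qPoch, Finset.prod_range_add, qPoch, qPoch]
  congr 1
  exact Finset.prod_congr rfl fun i _ => by ring

theorem qPoch_inv_pow_eq_zero (hQ0 : Q ≠ 0) {n k : ℕ} (hnk : n < k) : qPoch (Q ^ n)⁻¹ Q k = 0 :=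
  Finset.prod_eq_zero (Finset.mem_range.mpr hnk) (by rw [inv_mul_cancel₀ (pow_ne_zero n hQ0)]; ring)

theorem qPoch_inv_pow (hQ0 : Q ≠ 0) (j d : ℕ) :
    qPoch (Q ^ (j + d))⁻¹ Q d * qPoch Q Q j * Q ^ (j + d + 1).choose 2 =
      (-1) ^ d * Q ^ (j + 1).choose 2 * qPoch Q Q (j + d) := by
  induction d with
  | zero => simp [qPoch_zero, mul_comm]
  | succ d ih =>
    have hshift : (Q ^ (j + (d + 1)))⁻¹ * Q = (Q ^ (j + d))⁻¹ := by
      rw [← add_assoc, pow_succ, mul_inv, inv_mul_cancel_right₀ hQ0]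
    have hinv : (Q ^ (j + d + 1))⁻¹ * Q ^ (j + d + 1) = 1 := inv_mul_cancel₀ (pow_ne_zero _ hQ0)
    rw [qPoch_succ', hshift, ← add_assoc, Nat.choose_two_succ (j + d + 1), qPoch_succ,
      pow_add Q _ (j + d + 1), pow_succ' Q (j + d)]
    linear_combination (Q ^ (j + d + 1) - 1) * ih -
      qPoch (Q ^ (j + d))⁻¹ Q d * qPoch Q Q j * Q ^ (j + d + 1).choose 2 * hinv

end QPochhammer

section QChoose

variable {Q : RatFunc ℚ}

noncomputable def qChoose (Q : RatFunc ℚ) (n k : ℕ) : RatFunc ℚ :=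
  if k ≤ n then qPoch Q Q n / (qPoch Q Q k * qPoch Q Q (n - k)) else 0

theorem qChoose_add (Q : RatFunc ℚ) (k m : ℕ) :
    qChoose Q (k + m) k = qPoch Q Q (k + m) / (qPoch Q Q k * qPoch Q Q m) := by
  rw [qChoose, if_pos (Nat.le_add_right k m), Nat.add_sub_cancel_left]

theorem qChoose_of_lt {n k : ℕ} (h : n < k) : qChoose Q n k = 0 :=
  if_neg (Nat.not_le.mpr h)

theorem qChoose_symm {n k : ℕ} (h : k ≤ n) : qChoose Q n (n - k) = qChoose Q n k := by
  rw [qChoose, qChoose, if_pos (Nat.sub_le n k), if_pos h, Nat.sub_sub_self h,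
    mul_comm (qPoch Q Q k)]

theorem qChoose_zero_right (hQ : ∀ m ≠ 0, Q ^ m ≠ 1) (n : ℕ) : qChoose Q n 0 = 1 := by
  rw [qChoose, if_pos n.zero_le, Nat.sub_zero, qPoch_zero, one_mul,
    div_self (qPoch_self_ne_zero hQ n)]

theorem qChoose_self (hQ : ∀ m ≠ 0, Q ^ m ≠ 1) (n : ℕ) : qChoose Q n n = 1 := by
  rw [qChoose, if_pos le_rfl, Nat.sub_self, qPoch_zero, mul_one,
    div_self (qPoch_self_ne_zero hQ n)]

theorem qChoose_succ_succ (hQ : ∀ m ≠ 0, Q ^ m ≠ 1) (a b : ℕ) :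
    qChoose Q (a + 1) (b + 1) = qChoose Q a (b + 1) + Q ^ (a - b) * qChoose Q a b := by
  rcases lt_trichotomy a b with h | rfl | h
  · rw [qChoose_of_lt (by omega), qChoose_of_lt (by omega), qChoose_of_lt h]
    ring
  · rw [qChoose_self hQ, qChoose_self hQ, qChoose_of_lt (by omega), Nat.sub_self]
    ring
  obtain ⟨m, rfl⟩ : ∃ m, a = b + m + 1 := ⟨a - b - 1, by omega⟩
  rw [show b + m + 1 + 1 = (b + 1) + (m + 1) by ring, show b + m + 1 = (b + 1) + m by ring,
    qChoose_add, qChoose_add, show b + 1 + m = b + (m + 1) by ring, qChoose_add,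
    show b + (m + 1) - b = m + 1 by omega]
  rw [show b + 1 + (m + 1) = b + (m + 1) + 1 by ring, qPoch_succ Q Q (b + (m + 1)),
    qPoch_succ Q Q b, qPoch_succ Q Q m]
  have := qPoch_self_ne_zero hQ b
  have := qPoch_self_ne_zero hQ m
  have := one_sub_mul_pow_ne_zero hQ b
  have := one_sub_mul_pow_ne_zero hQ m
  field_simp
  ring

theorem qChoose_succ_succ' (hQ : ∀ m ≠ 0, Q ^ m ≠ 1) (a b : ℕ) :
    qChoose Q (a + 1) (b + 1) = Q ^ (b + 1) * qChoose Q a (b + 1) + qChoose Q a b := by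
  rcases lt_trichotomy a b with h | rfl | h
  · rw [qChoose_of_lt (by omega), qChoose_of_lt (by omega), qChoose_of_lt h]
    ring
  · rw [qChoose_self hQ, qChoose_self hQ, qChoose_of_lt (by omega)]
    ring
  obtain ⟨m, rfl⟩ : ∃ m, a = b + m + 1 := ⟨a - b - 1, by omega⟩
  rw [← qChoose_symm (show b + 1 ≤ b + m + 1 + 1 by omega),
    ← qChoose_symm (show b + 1 ≤ b + m + 1 by omega), ← qChoose_symm (show b ≤ b + m + 1 by omega),
    show b + m + 1 + 1 - (b + 1) = m + 1 by omega, show b + m + 1 - (b + 1) = m by omega,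
    show b + m + 1 - b = m + 1 by omega, qChoose_succ_succ hQ, show b + m + 1 - m = b + 1 by omega]
  ring

theorem sum_qChoose_succ_mul_qChoose_eq_zero (hQ : ∀ m ≠ 0, Q ^ m ≠ 1) {n m : ℕ}
    (hm : n + 1 ≤ m) (ih : ∀ m', n ≤ m' → ∑ j ∈ range (n + 1),
      (-1) ^ j * Q ^ (j + 1).choose 2 * qChoose Q n j * qChoose Q (m' - j) n = 1) :
    ∑ j ∈ range (n + 2),
      (-1) ^ j * Q ^ j.choose 2 * qChoose Q (n + 1) j * qChoose Q (m - j) n = 0 := by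
  -- By the second Pascal rule, this is the sum in `ih` at `m` minus the one at `m - 1`.
  have hf : ∑ j ∈ range (n + 2),
      (-1) ^ j * Q ^ (j + 1).choose 2 * qChoose Q n j * qChoose Q (m - j) n = 1 := by
    rw [Finset.sum_range_succ, qChoose_of_lt (Nat.lt_succ_self n), mul_zero, zero_mul, add_zero]
    exact ih m (by omega)
  have hg := ih (m - 1) (by omega)
  have hterm : ∀ i ∈ range (n + 1),
      (-1) ^ (i + 1) * Q ^ (i + 1).choose 2 * qChoose Q (n + 1) (i + 1) *
          qChoose Q (m - (i + 1)) n =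
        (-1) ^ (i + 1) * Q ^ (i + 1 + 1).choose 2 * qChoose Q n (i + 1) *
            qChoose Q (m - (i + 1)) n -
          (-1) ^ i * Q ^ (i + 1).choose 2 * qChoose Q n i * qChoose Q (m - 1 - i) n := by
    intro i _
    rw [qChoose_succ_succ' hQ, Nat.choose_two_succ (i + 1),
      show m - 1 - i = m - (i + 1) by omega, pow_add]
    ring
  rw [Finset.sum_range_succ'] at hf ⊢
  rw [Finset.sum_congr rfl hterm, Finset.sum_sub_distrib, hg, qChoose_zero_right hQ]
  rw [qChoose_zero_right hQ] at hf
  simp only [Nat.choose, Nat.sub_zero] at hf ⊢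
  linear_combination hf

theorem sum_qChoose_mul_qChoose_eq_one (hQ : ∀ m ≠ 0, Q ^ m ≠ 1) {n m : ℕ} (h : n ≤ m) :
    ∑ j ∈ range (n + 1),
      (-1) ^ j * Q ^ (j + 1).choose 2 * qChoose Q n j * qChoose Q (m - j) n = 1 := by
  induction n generalizing m with
  | zero => simp [qChoose_zero_right hQ]
  | succ n ih =>
    induction m, h using Nat.le_induction with
    | base =>
      rw [Finset.sum_range_succ', Finset.sum_eq_zero fun i _ => by
        rw [qChoose_of_lt (show n + 1 - (i + 1) < n + 1 by omega), mul_zero]]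
      simp [qChoose_zero_right hQ, qChoose_self hQ]
    | succ m hm ihm =>
      have hterm : ∀ j ∈ range (n + 2),
          (-1) ^ j * Q ^ (j + 1).choose 2 * qChoose Q (n + 1) j * qChoose Q (m + 1 - j) (n + 1) =
            (-1) ^ j * Q ^ (j + 1).choose 2 * qChoose Q (n + 1) j * qChoose Q (m - j) (n + 1) +
              Q ^ (m - n) *
                ((-1) ^ j * Q ^ j.choose 2 * qChoose Q (n + 1) j * qChoose Q (m - j) n) := by
        intro j hj
        have hjm : j ≤ m := by simp only [Finset.mem_range] at hj; omega
        rw [show m + 1 - j = m - j + 1 by omega, qChoose_succ_succ hQ]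
        rcases lt_or_ge (m - j) n with hlt | hle
        · rw [qChoose_of_lt hlt]
          ring
        · have hexp : (j + 1).choose 2 + (m - j - n) = (m - n) + j.choose 2 := by
            rw [Nat.choose_two_succ]
            omega
          have hpow : Q ^ (j + 1).choose 2 * Q ^ (m - j - n) = Q ^ (m - n) * Q ^ j.choose 2 := by
            rw [← pow_add, ← pow_add, hexp]
          linear_combination ((-1) ^ j * qChoose Q (n + 1) j * qChoose Q (m - j) n) * hpow
      rw [Finset.sum_congr rfl hterm, Finset.sum_add_distrib, ← Finset.mul_sum,
        sum_qChoose_succ_mul_qChoose_eq_zero hQ hm fun _ => ih, mul_zero, add_zero, ihm]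

end QChoose

section QChuVandermonde

variable {Q : RatFunc ℚ}

theorem qPoch_mul_qPoch_div_sq (hQ0 : Q ≠ 0) (hQ : ∀ m ≠ 0, Q ^ m ≠ 1) (j d : ℕ) :
    qPoch (Q ^ (j + d))⁻¹ Q d * qPoch (Q ^ (j + d + 1)) Q d / qPoch Q Q d ^ 2 =
      (-1) ^ (j + d) * (Q ^ (j + d + 1).choose 2)⁻¹ * ((-1) ^ j * Q ^ (j + 1).choose 2 *
        qChoose Q (j + d) j * qChoose Q (j + d + d) (j + d)) := by
  have hPj := qPoch_self_ne_zero hQ j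
  have hPd := qPoch_self_ne_zero hQ d
  have hPn := qPoch_self_ne_zero hQ (j + d)
  have hQC := pow_ne_zero ((j + d + 1).choose 2) hQ0
  have hX : qPoch (Q ^ (j + d))⁻¹ Q d = (-1) ^ d * Q ^ (j + 1).choose 2 * qPoch Q Q (j + d) /
      (qPoch Q Q j * Q ^ (j + d + 1).choose 2) := by
    rw [eq_div_iff (mul_ne_zero hPj hQC), ← mul_assoc]
    exact qPoch_inv_pow hQ0 j d
  have hsign : ((-1 : RatFunc ℚ) ^ j) ^ 2 = 1 := by rw [← pow_mul, pow_mul', neg_one_sq, one_pow]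
  rw [hX, qChoose_add, qChoose_add, qPoch_self_add Q (j + d) d, pow_add (-1 : RatFunc ℚ) j d]
  field_simp
  linear_combination -qPoch (Q ^ (j + d + 1)) Q d * hsign

theorem sum_qPoch_inv_pow_mul_qPoch (hQ0 : Q ≠ 0) (hQ : ∀ m ≠ 0, Q ^ m ≠ 1) (n : ℕ) :
    ∑ k ∈ range (n + 1), qPoch (Q ^ n)⁻¹ Q k * qPoch (Q ^ (n + 1)) Q k / qPoch Q Q k ^ 2 =
      (-1) ^ n * (Q ^ (n + 1).choose 2)⁻¹ := by
  rw [← Finset.sum_range_reflect]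
  have hterm : ∀ j ∈ range (n + 1),
      qPoch (Q ^ n)⁻¹ Q (n + 1 - 1 - j) * qPoch (Q ^ (n + 1)) Q (n + 1 - 1 - j) /
          qPoch Q Q (n + 1 - 1 - j) ^ 2 =
        (-1) ^ n * (Q ^ (n + 1).choose 2)⁻¹ * ((-1) ^ j * Q ^ (j + 1).choose 2 *
          qChoose Q n j * qChoose Q (2 * n - j) n) := by
    intro j hj
    obtain ⟨d, rfl⟩ : ∃ d, n = j + d := ⟨n - j, by simp only [Finset.mem_range] at hj; omega⟩
    rw [show j + d + 1 - 1 - j = d by omega, show 2 * (j + d) - j = j + d + d by omega]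
    exact qPoch_mul_qPoch_div_sq hQ0 hQ j d
  rw [Finset.sum_congr rfl hterm, ← Finset.mul_sum,
    sum_qChoose_mul_qChoose_eq_one hQ (by omega : n ≤ 2 * n), mul_one]

end QChuVandermonde

theorem sum_qPoch_q_mul_inv_q_pow (n : ℕ) :
    ∑ k ∈ range (2 * n + 1), qPoch (q * (q ^ (2 * n + 1))⁻¹) (q ^ 2) k *
        qPoch (q * q ^ (2 * n + 1)) (q ^ 2) k / qPoch (q ^ 2) (q ^ 2) k ^ 2 =
      (-1) ^ n * (q ^ (n * (n + 1)))⁻¹ := by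
  have hq2 : q ^ 2 ≠ 0 := pow_ne_zero 2 q_ne_zero
  have hlow : q * (q ^ (2 * n + 1))⁻¹ = ((q ^ 2) ^ n)⁻¹ := by
    rw [← pow_mul, pow_succ', mul_inv, mul_inv_cancel_left₀ q_ne_zero]
  have hhigh : q * q ^ (2 * n + 1) = (q ^ 2) ^ (n + 1) := by ring
  have hexp : n * (n + 1) = 2 * (n + 1).choose 2 := by
    rw [Nat.choose_two_right, Nat.add_sub_cancel, mul_comm (n + 1) n,
      Nat.mul_div_cancel' (Nat.even_mul_succ_self n).two_dvd]
  rw [hlow, hhigh, hexp, pow_mul, ← sum_qPoch_inv_pow_mul_qPoch hq2 (fun _ => q_sq_pow_ne_one) n]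
  refine (Finset.sum_subset (Finset.range_subset_range.mpr (by omega)) fun k _ hk => ?_).symm
  rw [qPoch_inv_pow_eq_zero hq2 (by simpa using hk), zero_mul, zero_div]

/-- `∑_{k=0}^{p-1} (q;q²)_k² / (q²;q²)_k² ≡ (-1/p) q^{(1-p²)/4} (mod [p]²)`. -/
theorem q_rv_supercongruence (p : ℕ) [Fact p.Prime] (hodd : Odd p) :
    ModQ 2 p
      (∑ k ∈ Finset.range p, qPoch q (q ^ 2) k ^ 2 / qPoch (q ^ 2) (q ^ 2) k ^ 2)
      ((legendreSym p (-1) : RatFunc ℚ) * (q ^ ((p ^ 2 - 1) / 4))⁻¹) := by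
  obtain ⟨n, rfl⟩ := hodd
  have hζ := Complex.isPrimitiveRoot_exp (2 * n + 1) (by omega)
  have hlegendre : (legendreSym (2 * n + 1) (-1) : RatFunc ℚ) = (-1) ^ n := by
    rw [legendreSym.at_neg_one (by omega), ZMod.χ₄_eq_neg_one_pow (by omega),
      show (2 * n + 1) / 2 = n by omega]
    push_cast
    ring
  have hexp : ((2 * n + 1) ^ 2 - 1) / 4 = n * (n + 1) := by
    rw [Nat.sub_eq_of_eq_add (by ring : (2 * n + 1) ^ 2 = 4 * (n * (n + 1)) + 1)]
    omega
  rw [hlegendre, hexp, ← sum_qPoch_q_mul_inv_q_pow]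
  apply modQ_of_dvdAt hζ (Fact.out : (2 * n + 1).Prime).one_lt
  rw [← Finset.sum_sub_distrib]
  refine DvdAt.sum fun k hk => ?_
  rw [← sub_div, div_eq_mul_inv (_ - _), ← inv_pow (qPoch (q ^ 2) (q ^ 2) k)]
  refine DvdAt.mul_right ?_
    (pow_mem (inv_qPoch_q_sq_mem_regularAt hζ ⟨n, rfl⟩ (by simpa using hk)) 2)
  exact dvdAt_qPoch_sq_sub (pow_one q ▸ q_pow_mem_regularAt 1) (q_pow_mem_regularAt 2)
    (q_pow_mem_regularAt _) (inv_q_pow_mem_regularAt (hζ.ne_zero (by omega)) _)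
    (pow_ne_zero _ q_ne_zero) (dvdAt_qInt_one_sub_q_pow _) k
end

section
/- Let p ≡ 3 (mod 4) be a prime. Then ∑_{k=0}^{p-1} binom(2k,k)^2 / 32^k ≡ 0 (mod p^2). -/
/-!
Write `p = 2m + 1`. Since `4 (m - j) (m + j + 1) = p² - (2j + 1)²`, comparing consecutive terms
shows `(-16)ᵏ C(m,k) C(m+k,k) ≡ C(2k,k)² (mod p²)` for `k ≤ m`. So the first `m + 1` terms of
the sum are those of the shifted Legendre polynomial `P_m` at `1/2`, which vanishes because `m` is
odd and `P_m(1 - x) = (-1)ᵐ P_m(x)`. For `m < k < p` the prime `p` divides `C(2k,k)`, so the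
remaining terms vanish mod `p²`.
-/

open Nat Finset Polynomial

namespace Polynomial

theorem aeval_shiftedLegendre {R : Type*} [Ring R] (n : ℕ) (x : R) :
    aeval x (shiftedLegendre n) =
      ∑ k ∈ range (n + 1), (-1) ^ k * (n.choose k : R) * ((n + k).choose n : R) * x ^ k := by
  simp [shiftedLegendre, map_sum]

theorem aeval_shiftedLegendre_eq_zero_of_odd {R : Type*} [Ring R] {n : ℕ} (hn : Odd n) {x : R}
    (hx : 2 * x = 1) : aeval x (shiftedLegendre n) = 0 := by
  have hsymm := shiftedLegendre_eval_symm n x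
  rw [show 1 - x = x by rw [← hx, two_mul, add_sub_cancel_right], hn.neg_one_pow, neg_one_mul,
    eq_neg_iff_add_eq_zero, ← two_mul] at hsymm
  calc aeval x (shiftedLegendre n) = (2 * x) * aeval x (shiftedLegendre n) := by rw [hx, one_mul]
    _ = x * (2 * aeval x (shiftedLegendre n)) := by simp only [two_mul, add_mul, mul_add]
    _ = 0 := by rw [hsymm, mul_zero]

end Polynomial

theorem neg_sixteen_pow_mul_choose_mul_choose_eq_centralBinom_sq {R : Type*} [CommRing R]
    {m k : ℕ} (hk : k ≤ m) (hsq : (2 * m + 1 : R) ^ 2 = 0) (hunit : IsUnit (k ! : R)) :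
    (-16 : R) ^ k * m.choose k * (m + k).choose k = (centralBinom k : R) ^ 2 := by
  induction k with
  | zero => simp
  | succ k ih =>
    rw [factorial_succ, cast_mul, IsUnit.mul_iff] at hunit
    have ih := ih (by omega) hunit.2
    have hleft : (m.choose (k + 1) : R) * (k + 1) = m.choose k * (m - k) := by
      rw [← cast_sub (by omega : k ≤ m)]
      exact_mod_cast congrArg (Nat.cast : ℕ → R) (choose_succ_right_eq m k)
    have hright :
        ((m + (k + 1)).choose (k + 1) : R) * (k + 1) = (m + k + 1) * (m + k).choose k := by
      exact_mod_cast congrArg (Nat.cast : ℕ → R) (add_one_mul_choose_eq (m + k) k).symm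
    have hcentral : (k + 1 : R) * centralBinom (k + 1) = 2 * (2 * k + 1) * centralBinom k := by
      exact_mod_cast congrArg (Nat.cast : ℕ → R) (succ_mul_centralBinom_succ k)
    apply (hunit.1.pow 2).mul_left_cancel
    push_cast
    -- `-16 (m - k) (m + k + 1) = 4 (2k + 1)² - 4 (2m + 1)²`
    linear_combination (-16 : R) * (m - k) * (m + k + 1) * ih
      + (-16 : R) ^ (k + 1) * ((m + (k + 1)).choose (k + 1) * (k + 1) : R) * hleft
      + (-16 : R) ^ (k + 1) * (m.choose k * (m - k) : R) * hright
      - ((k + 1) * centralBinom (k + 1) + 2 * (2 * k + 1) * centralBinom k : R) * hcentral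
      - 4 * (centralBinom k : R) ^ 2 * hsq

theorem ZMod.isUnit_factorial_of_lt {p k : ℕ} (hp : p.Prime) (hk : k < p) (e : ℕ) :
    IsUnit (k ! : ZMod (p ^ e)) := by
  have hndvd : ¬p ∣ k ! := fun h => by have := hp.dvd_factorial.1 h; omega
  exact (ZMod.isUnit_iff_coprime _ _).2 ((hp.coprime_iff_not_dvd.2 hndvd).symm.pow_right e)

theorem ZMod.natCast_sq_eq_zero_of_dvd {n a : ℕ} (h : n ∣ a) : (a : ZMod (n ^ 2)) ^ 2 = 0 := by
  rw [← Nat.cast_pow, ZMod.natCast_eq_zero_iff]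
  exact pow_dvd_pow_of_dvd h 2

theorem ZMod.two_mul_sixteen_mul_inv_thirtyTwo {n : ℕ} (hn : Odd n) :
    (2 : ZMod n) * (16 * 32⁻¹) = 1 := by
  have h32 : IsUnit (32 : ZMod n) := by
    exact_mod_cast (ZMod.isUnit_iff_coprime (2 ^ 5) n).2 ((Nat.coprime_two_left.2 hn).pow_left 5)
  rw [← mul_assoc, show (2 * 16 : ZMod n) = 32 by norm_num, ZMod.mul_inv_of_unit _ h32]

/-- For a prime `p ≡ 3 (mod 4)`,
`∑_{k=0}^{p-1} C(2k,k)^2 / 32^k ≡ 0 (mod p^2)`, stated in `ZMod (p^2)`. -/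
theorem sum_central_binom_32 (p : ℕ) (hp : p.Prime) (h3 : p % 4 = 3) :
    ∑ k ∈ Finset.range p,
        ((Nat.choose (2 * k) k : ZMod (p ^ 2)) ^ 2 * ((32 : ZMod (p ^ 2))⁻¹) ^ k)
      = 0 := by
  set m := p / 2
  have hpm : p = 2 * m + 1 := by omega
  have hm : Odd m := Nat.odd_iff.2 (by omega)
  have hp2 : (2 * m + 1 : ZMod (p ^ 2)) ^ 2 = 0 := by
    have hcast : (p : ZMod (p ^ 2)) = 2 * m + 1 := by
      exact_mod_cast congrArg (Nat.cast : ℕ → ZMod (p ^ 2)) hpm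
    rw [← hcast]
    exact ZMod.natCast_sq_eq_zero_of_dvd dvd_rfl
  set x : ZMod (p ^ 2) := 16 * 32⁻¹ with hx_def
  have hx : 2 * x = 1 := ZMod.two_mul_sixteen_mul_inv_thirtyTwo (Nat.odd_iff.2 (by omega)).pow
  have hhead : ∀ k ∈ range (m + 1), ((2 * k).choose k : ZMod (p ^ 2)) ^ 2 * 32⁻¹ ^ k
      = (-1) ^ k * (m.choose k : ZMod (p ^ 2)) * ((m + k).choose m : ZMod (p ^ 2)) * x ^ k := by
    intro k hk
    have hkm : k ≤ m := Nat.lt_succ_iff.1 (mem_range.1 hk)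
    rw [← centralBinom_eq_two_mul_choose,
      ← neg_sixteen_pow_mul_choose_mul_choose_eq_centralBinom_sq hkm hp2
        (ZMod.isUnit_factorial_of_lt hp (by omega) 2),
      choose_symm_add (a := m), hx_def, neg_pow]
    ring
  have htail :
      ∀ k ∈ Ico (m + 1) p, ((2 * k).choose k : ZMod (p ^ 2)) ^ 2 * 32⁻¹ ^ k = 0 := by
    intro k hk
    rw [mem_Ico] at hk
    rw [ZMod.natCast_sq_eq_zero_of_dvd (hp.dvd_choose (by omega) (by omega) (by omega)), zero_mul]
  rw [← sum_range_add_sum_Ico _ (show m + 1 ≤ p by omega), sum_eq_zero htail,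
    sum_congr rfl hhead, ← aeval_shiftedLegendre, aeval_shiftedLegendre_eq_zero_of_odd hm hx,
    add_zero]
end

section
/- Let n be a positive integer and define F_n(x,q) = ∑_{k=0}^n (-1)^k qbinom(n,k) qbinom(n+k,k) (x;q)_k q^{k(k+1)/2 - nk} / (-q;q)_k. Then F_n(x,q) = (-1)^n F_n(-x,q), as an identity of polynomials in x over the field of rational functions in q. -/
open Polynomial Finset

/-!
In the basis `(x;q)_k`, multiplication by `x` acts by `x (x;q)_k = q⁻ᵏ ((x;q)_k - (x;q)_{k+1})`.
Comparing coefficients, which reduces to hypergeometric ratio identities between neighbouring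
coefficients, shows that the `F_m` satisfy the three-term recurrence
`(1 - q^{m+2}) F_{m+2} = (1 - q^{2m+3}) x F_{m+1} - q^{m+2} (1 - q^{m+1}) F_m`
with `F_0 = 1` and `F_1 = x`. Then `(-1)^m F_m(-x)` satisfies the same recurrence with the same
initial values, so it equals `F_m(x)`.
-/

theorem comp_neg_X_of_three_term_recurrence {R : Type*} [CommRing R] [NoZeroDivisors R]
    (G : ℕ → R[X]) (a b d : ℕ → R) (ha : ∀ p, a p ≠ 0)
    (h0 : (G 0).comp (-X) = G 0) (h1 : (G 1).comp (-X) = -G 1)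
    (hrec : ∀ p, C (a p) * G (p + 2) = C (b p) * (X * G (p + 1)) - C (d p) * G p) (m : ℕ) :
    (G m).comp (-X) = (-1) ^ m * G m := by
  induction m using Nat.twoStepInduction with
  | zero => simpa using h0
  | one => simpa using h1
  | more p ih0 ih1 =>
    refine mul_left_cancel₀ (C_ne_zero.2 (ha p)) ?_
    calc C (a p) * (G (p + 2)).comp (-X) = (C (a p) * G (p + 2)).comp (-X) := by
          rw [mul_comp, C_comp]
      _ = (-1) ^ p * (C (b p) * (X * G (p + 1)) - C (d p) * G p) := by
          rw [hrec, sub_comp, mul_comp, mul_comp, mul_comp, C_comp, C_comp, X_comp, ih0, ih1]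
          ring
      _ = C (a p) * ((-1) ^ (p + 2) * G (p + 2)) := by
          rw [← hrec]
          ring

lemma prod_mul_pow_sub_pow {R : Type*} [CommRing R] (Q : R) (k e : ℕ) :
    ∏ i ∈ range k, Q * (Q ^ (k + e) - Q ^ i) =
      (-1) ^ k * Q ^ (k * (k + 1) / 2) * ∏ i ∈ range k, (1 - Q ^ (e + 1 + i)) := by
  induction k with
  | zero => simp
  | succ k ih =>
    have hT : (k + 1) * (k + 1 + 1) / 2 = k * (k + 1) / 2 + (k + 1) := by
      rw [show (k + 1) * (k + 1 + 1) = k * (k + 1) + 2 * (k + 1) by ring]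
      omega
    have hshift : ∀ i, Q * (Q ^ (k + 1 + e) - Q ^ (i + 1)) = Q * (Q * (Q ^ (k + e) - Q ^ i)) :=
      fun i => by ring
    rw [prod_range_succ', prod_range_succ, hT]
    simp only [hshift]
    rw [prod_mul_distrib, ih, prod_const, card_range]
    ring

lemma one_sub_pow_ne_zero {R : Type*} [Ring R] {Q : R} (hQ : ¬ IsOfFinOrder Q) {t : ℕ}
    (ht : t ≠ 0) : 1 - Q ^ t ≠ 0 :=
  fun h => hQ (isOfFinOrder_iff_pow_eq_one.2 ⟨t, Nat.pos_of_ne_zero ht, (sub_eq_zero.1 h).symm⟩)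

noncomputable section

variable {K : Type*} [Field K] (Q : K)

/- `qLegendreNum Q m k = (-1)^k Q^{k(k+1)/2} (Q^{m-k+1};Q)_k (Q^{m+1};Q)_k` for `k ≤ m`, written so
that it vanishes for `k > m` with no truncated subtraction, and
`qLegendreDen Q k = (Q;Q)_k² (-Q;Q)_k`. -/
def qLegendreNum (m k : ℕ) : K := ∏ i ∈ range k, Q * (Q ^ m - Q ^ i) * (1 - Q ^ (m + 1 + i))

def qLegendreDen (k : ℕ) : K := ∏ i ∈ range k, (1 - Q ^ (i + 1)) * (1 - Q ^ (2 * i + 2))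

def qLegendreCoeff (m k : ℕ) : K := qLegendreNum Q m k / (Q ^ (m * k) * qLegendreDen Q k)

def qPochPoly (k : ℕ) : K[X] := ∏ i ∈ range k, (1 - C (Q ^ i) * X)

def qLegendrePoly (m : ℕ) : K[X] :=
  ∑ k ∈ range (m + 1), C (qLegendreCoeff Q m k) * qPochPoly Q k

variable {Q}

lemma qLegendreNum_succ (m k : ℕ) :
    qLegendreNum Q m (k + 1) =
      qLegendreNum Q m k * (Q * (Q ^ m - Q ^ k) * (1 - Q ^ (m + 1 + k))) :=
  prod_range_succ _ _

lemma qLegendreNum_succ_succ (m k : ℕ) :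
    qLegendreNum Q (m + 1) (k + 1) =
      -Q ^ (k + 1) * (1 - Q ^ (m + k + 1)) * (1 - Q ^ (m + k + 2)) * qLegendreNum Q m k := by
  induction k with
  | zero => simp only [qLegendreNum, zero_add, prod_range_one, prod_range_zero]; ring
  | succ k ih =>
    rw [qLegendreNum_succ, ih, qLegendreNum_succ]
    ring

lemma pow_mul_qLegendreNum_succ (m k : ℕ) :
    Q ^ k * qLegendreNum Q m (k + 1) =
      -Q * (Q ^ k - Q ^ m) * (Q ^ k - Q ^ (m + 1)) * qLegendreNum Q (m + 1) k := by
  induction k with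
  | zero => simp only [qLegendreNum, zero_add, prod_range_one, prod_range_zero]; ring
  | succ k ih =>
    rw [qLegendreNum_succ, qLegendreNum_succ (m + 1)]
    linear_combination (Q * Q * (Q ^ m - Q ^ (k + 1)) * (1 - Q ^ (m + 1 + (k + 1)))) * ih

lemma qLegendreDen_succ (k : ℕ) :
    qLegendreDen Q (k + 1) = qLegendreDen Q k * ((1 - Q ^ (k + 1)) * (1 - Q ^ (2 * k + 2))) :=
  prod_range_succ _ _

lemma qLegendreDen_ne_zero (hQ : ¬ IsOfFinOrder Q) (k : ℕ) : qLegendreDen Q k ≠ 0 :=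
  prod_ne_zero_iff.2 fun _ _ =>
    mul_ne_zero (one_sub_pow_ne_zero hQ (by omega)) (one_sub_pow_ne_zero hQ (by omega))

lemma qLegendreCoeff_eq_zero_of_lt {m k : ℕ} (h : m < k) : qLegendreCoeff Q m k = 0 := by
  rw [qLegendreCoeff, qLegendreNum, prod_eq_zero (mem_range.2 h) (by simp), zero_div]

@[simp] lemma qLegendreCoeff_zero_right (m : ℕ) : qLegendreCoeff Q m 0 = 1 := by
  simp [qLegendreCoeff, qLegendreNum, qLegendreDen]

lemma qLegendreCoeff_three_term (hQ0 : Q ≠ 0) (hQ : ¬ IsOfFinOrder Q) (p k : ℕ) :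
    (1 - Q ^ (p + 2)) * qLegendreCoeff Q (p + 2) (k + 1) =
      (1 - Q ^ (2 * p + 3)) *
          (qLegendreCoeff Q (p + 1) (k + 1) / Q ^ (k + 1) - qLegendreCoeff Q (p + 1) k / Q ^ k) -
        Q ^ (p + 2) * (1 - Q ^ (p + 1)) * qLegendreCoeff Q p (k + 1) := by
  have hD := qLegendreDen_ne_zero hQ k
  have h1 := one_sub_pow_ne_zero hQ (Nat.succ_ne_zero k)
  have h2 := one_sub_pow_ne_zero hQ (by omega : 2 * k + 2 ≠ 0)
  -- all four numerators are multiples of `qLegendreNum Q (p + 1) k`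
  have hlower : qLegendreNum Q p (k + 1) =
      -Q * (Q ^ k - Q ^ p) * (Q ^ k - Q ^ (p + 1)) * qLegendreNum Q (p + 1) k / Q ^ k := by
    rw [eq_div_iff (pow_ne_zero _ hQ0), mul_comm]
    exact pow_mul_qLegendreNum_succ p k
  rw [qLegendreCoeff, qLegendreCoeff, qLegendreCoeff, qLegendreCoeff, qLegendreDen_succ,
    show p + 2 = p + 1 + 1 from rfl, qLegendreNum_succ_succ, qLegendreNum_succ (p + 1), hlower]
  field_simp
  ring

lemma qPochPoly_succ (k : ℕ) : qPochPoly Q (k + 1) = qPochPoly Q k * (1 - C (Q ^ k) * X) :=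
  prod_range_succ _ _

lemma X_mul_qPochPoly (hQ0 : Q ≠ 0) (k : ℕ) :
    X * qPochPoly Q k = C (Q ^ k)⁻¹ * (qPochPoly Q k - qPochPoly Q (k + 1)) := by
  have h : C (Q ^ k)⁻¹ * C (Q ^ k) = (1 : K[X]) := by
    rw [← C_mul, inv_mul_cancel₀ (pow_ne_zero _ hQ0), C_1]
  rw [qPochPoly_succ]
  linear_combination (-(X * qPochPoly Q k)) * h

lemma X_mul_sum_qPochPoly (hQ0 : Q ≠ 0) (f : ℕ → K) (N : ℕ) :
    X * ∑ k ∈ range N, C (f k) * qPochPoly Q k =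
      ∑ k ∈ range N, C (f k / Q ^ k) * qPochPoly Q k -
        ∑ k ∈ range N, C (f k / Q ^ k) * qPochPoly Q (k + 1) := by
  rw [mul_sum, ← sum_sub_distrib]
  refine sum_congr rfl fun k _ => ?_
  rw [mul_left_comm, X_mul_qPochPoly hQ0, ← mul_assoc, ← C_mul, div_eq_mul_inv, mul_sub]

lemma qLegendrePoly_eq_sum_range {m N : ℕ} (h : m < N) :
    qLegendrePoly Q m = ∑ k ∈ range N, C (qLegendreCoeff Q m k) * qPochPoly Q k := by
  refine sum_subset (range_subset_range.2 h) fun k _ hk => ?_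
  rw [qLegendreCoeff_eq_zero_of_lt (by simpa using hk), C_0, zero_mul]

lemma qLegendrePoly_zero : qLegendrePoly Q 0 = 1 := by
  simp [qLegendrePoly, qPochPoly]

lemma qLegendrePoly_one (hQ0 : Q ≠ 0) (hQ : ¬ IsOfFinOrder Q) : qLegendrePoly Q 1 = X := by
  have h11 : qLegendreCoeff Q 1 1 = -1 := by
    rw [qLegendreCoeff, div_eq_iff (mul_ne_zero (pow_ne_zero _ hQ0) (qLegendreDen_ne_zero hQ 1))]
    simp only [qLegendreNum, qLegendreDen, prod_range_one]
    ring
  simp [qLegendrePoly, sum_range_succ, qPochPoly, h11]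

lemma qLegendrePoly_three_term (hQ0 : Q ≠ 0) (hQ : ¬ IsOfFinOrder Q) (p : ℕ) :
    C (1 - Q ^ (p + 2)) * qLegendrePoly Q (p + 2) =
      C (1 - Q ^ (2 * p + 3)) * (X * qLegendrePoly Q (p + 1)) -
        C (Q ^ (p + 2) * (1 - Q ^ (p + 1))) * qLegendrePoly Q p := by
  have hsplit : ∀ f : ℕ → K, ∑ k ∈ range (p + 3), C (f k) * qPochPoly Q k =
      ∑ k ∈ range (p + 2), C (f (k + 1)) * qPochPoly Q (k + 1) + C (f 0) * qPochPoly Q 0 :=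
    fun f => sum_range_succ' _ _
  rw [qLegendrePoly_eq_sum_range (by omega : p + 2 < p + 3),
    qLegendrePoly_eq_sum_range (by omega : p + 1 < p + 3),
    qLegendrePoly_eq_sum_range (by omega : p < p + 3), X_mul_sum_qPochPoly hQ0, hsplit, hsplit,
    hsplit, sum_range_succ _ (p + 2), qLegendreCoeff_eq_zero_of_lt (by omega : p + 1 < p + 2)]
  set α := 1 - Q ^ (p + 2)
  set β := 1 - Q ^ (2 * p + 3)
  set γ := Q ^ (p + 2) * (1 - Q ^ (p + 1))
  have hcoeff :
      ∑ k ∈ range (p + 2), C (α * qLegendreCoeff Q (p + 2) (k + 1)) * qPochPoly Q (k + 1) =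
        ∑ k ∈ range (p + 2), C (β * (qLegendreCoeff Q (p + 1) (k + 1) / Q ^ (k + 1))) *
            qPochPoly Q (k + 1) -
          ∑ k ∈ range (p + 2), C (β * (qLegendreCoeff Q (p + 1) k / Q ^ k)) * qPochPoly Q (k + 1) -
          ∑ k ∈ range (p + 2), C (γ * qLegendreCoeff Q p (k + 1)) * qPochPoly Q (k + 1) := by
    simp only [← sum_sub_distrib, ← sub_mul, ← C_sub]
    refine sum_congr rfl fun k _ => ?_
    rw [qLegendreCoeff_three_term hQ0 hQ, mul_sub]
  have hconst : C α = C β - C γ := by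
    rw [← C_sub]
    congr 1
    ring
  simp only [mul_add, mul_sub, mul_sum, ← mul_assoc, ← C_mul]
  rw [hcoeff]
  simp only [qLegendreCoeff_zero_right, zero_div, mul_zero, C_0, zero_mul, pow_zero, div_one,
    mul_one, add_zero, hconst]
  ring

theorem qLegendrePoly_comp_neg_X (hQ0 : Q ≠ 0) (hQ : ¬ IsOfFinOrder Q) (m : ℕ) :
    (qLegendrePoly Q m).comp (-X) = (-1) ^ m * qLegendrePoly Q m :=
  comp_neg_X_of_three_term_recurrence (qLegendrePoly Q) (fun p => 1 - Q ^ (p + 2))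
    (fun p => 1 - Q ^ (2 * p + 3)) (fun p => Q ^ (p + 2) * (1 - Q ^ (p + 1)))
    (fun _ => one_sub_pow_ne_zero hQ (by omega)) (by simp [qLegendrePoly_zero])
    (by simp [qLegendrePoly_one hQ0 hQ]) (qLegendrePoly_three_term hQ0 hQ) m

end

lemma not_isOfFinOrder_q : ¬ IsOfFinOrder q := by
  rw [isOfFinOrder_iff_pow_eq_one]
  rintro ⟨t, ht, h⟩
  exact RatFunc.transcendental_X (K := ℚ)
    ⟨X ^ t - 1, X_pow_sub_C_ne_zero ht 1, by simpa [sub_eq_zero, q] using h⟩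

lemma qLegendreCoeff_q {n k : ℕ} (hk : k ≤ n) :
    qLegendreCoeff q n k = (-1 : RatFunc ℚ) ^ k * qBinom n k q * qBinom (n + k) k q *
        q ^ ((k * (k + 1) / 2 : ℕ) - (n : ℤ) * k) / qPoch (-q) q k := by
  obtain ⟨e, rfl⟩ := Nat.exists_eq_add_of_le hk
  have hq0 : q ≠ 0 := RatFunc.X_ne_zero
  have h1 : ∏ i ∈ range k, (1 - q ^ (i + 1)) ≠ 0 :=
    prod_ne_zero_iff.2 fun i _ => one_sub_pow_ne_zero not_isOfFinOrder_q (Nat.succ_ne_zero i)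
  have h2 : ∏ i ∈ range k, (1 + q ^ (i + 1)) ≠ 0 := by
    refine prod_ne_zero_iff.2 fun i _ h => one_sub_pow_ne_zero not_isOfFinOrder_q
      (by omega : 2 * i + 2 ≠ 0) ?_
    linear_combination (1 - q ^ (i + 1)) * h
  have hnum : qLegendreNum q (k + e) k =
      (∏ i ∈ range k, q * (q ^ (k + e) - q ^ i)) * ∏ i ∈ range k, (1 - q ^ (k + e + 1 + i)) :=
    prod_mul_distrib
  have hden : qLegendreDen q k = (∏ i ∈ range k, (1 - q ^ (i + 1))) *
      (∏ i ∈ range k, (1 - q ^ (i + 1))) * ∏ i ∈ range k, (1 + q ^ (i + 1)) := by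
    rw [qLegendreDen, ← prod_mul_distrib, ← prod_mul_distrib]
    exact prod_congr rfl fun i _ => by ring
  rw [qBinom, qBinom, show k + e - k + 1 = e + 1 by omega,
    show k + e + k - k + 1 = k + e + 1 by omega, zpow_sub₀ hq0, zpow_natCast,
    show ((k + e : ℕ) : ℤ) * k = ((k + e) * k : ℕ) by push_cast; ring, zpow_natCast,
    qLegendreCoeff, hnum, hden, prod_mul_pow_sub_pow]
  simp only [qPoch, ← pow_add, ← pow_succ', neg_mul, sub_neg_eq_add]
  field_simp

theorem q_legendre_symmetry_general (n : ℕ) (F : Polynomial (RatFunc ℚ))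
    (hF : F = ∑ k ∈ Finset.range (n + 1),
        Polynomial.C ((-1 : RatFunc ℚ) ^ k * qBinom n k q * qBinom (n + k) k q *
            q ^ ((k * (k + 1) / 2 : ℕ) - (n : ℤ) * k) / qPoch (-q) q k) *
          ∏ i ∈ Finset.range k, (1 - Polynomial.C (q ^ i) * Polynomial.X)) :
    F = Polynomial.C ((-1 : RatFunc ℚ) ^ n) * F.comp (-Polynomial.X) := by
  have hF' : F = qLegendrePoly q n := by
    rw [hF, qLegendrePoly]
    refine sum_congr rfl fun k hk => ?_
    rw [← qLegendreCoeff_q (Nat.lt_succ_iff.1 (mem_range.1 hk))]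
    rfl
  rw [hF', qLegendrePoly_comp_neg_X RatFunc.X_ne_zero not_isOfFinOrder_q, ← mul_assoc, map_pow,
    map_neg, map_one, ← mul_pow, neg_one_mul, neg_neg, one_pow, one_mul]

/-- With `F_n(x) = ∑_{k≤n} (-1)^k qbinom(n,k) qbinom(n+k,k) (x;q)_k q^{k(k+1)/2-nk}/(-q;q)_k`,
we have `F_n(x) = (-1)^n F_n(-x)`. -/
theorem q_legendre_symmetry (n : ℕ) (hn : 0 < n) (F : Polynomial (RatFunc ℚ))
    (hF : F = ∑ k ∈ Finset.range (n + 1),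
        Polynomial.C ((-1 : RatFunc ℚ) ^ k * qBinom n k q * qBinom (n + k) k q *
            q ^ ((k * (k + 1) / 2 : ℕ) - (n : ℤ) * k) / qPoch (-q) q k) *
          ∏ i ∈ Finset.range k, (1 - Polynomial.C (q ^ i) * Polynomial.X)) :
    F = Polynomial.C ((-1 : RatFunc ℚ) ^ n) * F.comp (-Polynomial.X) :=
  q_legendre_symmetry_general n F hF
end
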